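/- arXiv:1807.00616 — 5 statements merged into one kernel-verified Lean document; each statement's English description precedes it below -/
import Mathlib

section
/- Let α, β < ω^ω and m ∈ ℕ. If α ≤ β and MC(α) < m, then α[m] ≤ β[m]. -/
/- Ordinals `α < ω^ω` are represented in Cantor normal form as the list of their
exponents in nonincreasing order: `[n₀, n₁, …, n_{k-1}]` codes `ω^{n₀} + ⋯ + ω^{n_{k-1}}`,
and such a list is a valid Cantor normal form when it is sorted w.r.t. `≥`. -/

/-- The Ketonen–Solovay operation `α[m]`: `0[m] = 0`; `α[m] = β` if `α = β + 1`;
`α[m] = β + ω^(n-1)·m` if `α = β + ω^n` with `n ≥ 1`. -/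
def KSstep : List ℕ → ℕ → List ℕ
  | [], _ => []
  | [0], _ => []
  | [Nat.succ n], m => List.replicate m n
  | a :: b :: l, m => a :: KSstep (b :: l) m

/-- A finite set `X = {x₀ < ⋯ < x_{ℓ-1}} ⊆ ℕ` is `α`-large if `α[x₀][x₁]⋯[x_{ℓ-1}| = 0`. -/
def IsLarge (α : List ℕ) (X : Finset ℕ) : Prop :=
  (X.sort (· ≤ ·)).foldl KSstep α = []

/-- The ordering on Cantor normal forms: `α < β` iff there is `i` with `n_j = m_j`
for all `j < i` and (`n_i < m_i` or `α` ends at `i` while `β` does not); this is the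
lexicographic order on the lists of exponents. `α ≤ β` iff `α = β` or `α < β`. -/
def CNFLe (α β : List ℕ) : Prop := α = β ∨ List.Lex (· < ·) α β

/-- `MC α` is the maximal coefficient of `α`: writing `α = ω^n·k_n + ⋯ + ω^0·k_0`,
`MC α = max {k_n, …, k_0}`, i.e. the maximal multiplicity of an exponent in the list. -/
def MC (α : List ℕ) : ℕ := (α.map fun n => α.count n).foldr max 0

/- `α[m]` only touches the last term of `α`, replacing `ω^(n+1)` by `m` copies of `ω^n`.
If sorted `α < β` first differ at a position that is not the last one of `β`, that position
survives in `β[m]`, while everything `α[m]` puts there is at most the smaller exponent of `α`.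
Otherwise `β = γ + ω^(k+1)` and `β[m] = γ + ω^k·m`, and `α[m] < β[m]` because all exponents of
`α` are at most `k` and fewer than `m` of them equal `k`. -/

lemma List.lex_cons_of_forall_rel {ι : Type*} {r : ι → ι → Prop} {γ δ : List ι} {b : ι}
    (h : ∀ x ∈ γ, r x b) : List.Lex r γ (b :: δ) := by
  cases γ with
  | nil => exact List.Lex.nil
  | cons a γ => exact List.Lex.rel (h a List.mem_cons_self)

lemma CNFLe.nil_left (β : List ℕ) : CNFLe [] β := by
  cases β with
  | nil => exact Or.inl rfl
  | cons b β => exact Or.inr List.Lex.nil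

lemma CNFLe.cons (a : ℕ) {α β : List ℕ} (h : CNFLe α β) : CNFLe (a :: α) (a :: β) :=
  h.imp (congrArg _) List.Lex.cons

lemma count_le_MC (α : List ℕ) (n : ℕ) : α.count n ≤ MC α := by
  by_cases h : n ∈ α
  · exact List.le_max_of_le (List.mem_map_of_mem h) le_rfl
  · simp [List.count_eq_zero_of_not_mem h]

lemma KSstep_cons_of_ne_nil (a : ℕ) {l : List ℕ} (hl : l ≠ []) (m : ℕ) :
    KSstep (a :: l) m = a :: KSstep l m := by
  obtain ⟨b, l, rfl⟩ := List.exists_cons_of_ne_nil hl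
  simp only [KSstep]

lemma lt_of_mem_KSstep_singleton {a m x : ℕ} (hx : x ∈ KSstep [a] m) : x < a := by
  cases a with
  | zero => simp [KSstep] at hx
  | succ n =>
    simp only [KSstep] at hx
    rw [List.eq_of_mem_replicate hx]
    exact n.lt_succ_self

lemma le_of_mem_KSstep {α : List ℕ} {k m : ℕ} (hα : ∀ y ∈ α, y ≤ k) :
    ∀ x ∈ KSstep α m, x ≤ k := by
  induction α with
  | nil => simp [KSstep]
  | cons a l ih =>
    rcases eq_or_ne l [] with rfl | hl
    · exact fun x hx => (lt_of_mem_KSstep_singleton hx).le.trans (hα a List.mem_cons_self)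
    · rw [KSstep_cons_of_ne_nil a hl]
      rintro x (_ | ⟨_, hx⟩)
      · exact hα a List.mem_cons_self
      · exact ih (fun y hy => hα y (List.mem_cons_of_mem a hy)) x hx

lemma KSstep_lex_cons_of_head_lt {a b m : ℕ} {α δ : List ℕ}
    (hα : List.Pairwise (· ≥ ·) (a :: α)) (hab : a < b) :
    List.Lex (· < ·) (KSstep (a :: α) m) (b :: δ) := by
  refine List.lex_cons_of_forall_rel fun x hx => (le_of_mem_KSstep ?_ x hx).trans_lt hab
  rintro y (_ | ⟨_, hy⟩)
  exacts [le_rfl, List.rel_of_pairwise_cons hα hy]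

lemma KSstep_lex_replicate {k m : ℕ} {α : List ℕ} (hα : List.Pairwise (· ≥ ·) α)
    (hk : ∀ y ∈ α, y ≤ k) {j : ℕ} (hj : α.count k < j) :
    List.Lex (· < ·) (KSstep α m) (List.replicate j k) := by
  obtain ⟨j, rfl⟩ := Nat.exists_eq_add_one_of_ne_zero (Nat.ne_zero_of_lt hj)
  rw [List.replicate_succ]
  induction α generalizing j with
  | nil => exact List.Lex.nil
  | cons a l ih =>
    rcases (hk a List.mem_cons_self).lt_or_eq with hak | rfl
    · exact KSstep_lex_cons_of_head_lt hα hak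
    rcases eq_or_ne l [] with rfl | hl
    · exact List.lex_cons_of_forall_rel fun x hx => lt_of_mem_KSstep_singleton hx
    rw [List.count_cons_self] at hj
    obtain ⟨j, rfl⟩ := Nat.exists_eq_add_one_of_ne_zero (by omega : j ≠ 0)
    rw [KSstep_cons_of_ne_nil a hl, List.replicate_succ]
    exact List.Lex.cons (ih hα.of_cons (fun y hy => List.rel_of_pairwise_cons hα hy) _ (by omega))

lemma KSstep_le_KSstep_of_lex {m : ℕ} {α β : List ℕ} (hα : List.Pairwise (· ≥ ·) α)
    (hcount : ∀ n, α.count n < m) (hlex : List.Lex (· < ·) α β) :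
    CNFLe (KSstep α m) (KSstep β m) := by
  induction hlex with
  | nil => exact CNFLe.nil_left _
  | @rel a α b β hab =>
    rcases eq_or_ne β [] with rfl | hβ
    · obtain ⟨k, rfl⟩ := Nat.exists_eq_add_one_of_ne_zero (Nat.ne_zero_of_lt hab)
      have hak : a ≤ k := Nat.le_of_lt_succ hab
      refine Or.inr (KSstep_lex_replicate hα ?_ (hcount k))
      rintro y (_ | ⟨_, hy⟩)
      exacts [hak, (List.rel_of_pairwise_cons hα hy).trans hak]
    · rw [KSstep_cons_of_ne_nil b hβ]
      exact Or.inr (KSstep_lex_cons_of_head_lt hα hab)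
  | @cons a α β hlex ih =>
    have hβ : β ≠ [] := by rintro rfl; cases hlex
    rw [KSstep_cons_of_ne_nil a hβ]
    rcases eq_or_ne α [] with rfl | hα'
    · exact Or.inr (List.lex_cons_of_forall_rel fun x hx => lt_of_mem_KSstep_singleton hx)
    rw [KSstep_cons_of_ne_nil a hα']
    exact (ih hα.of_cons fun n => (List.Sublist.count_le n (List.sublist_cons_self a α)).trans_lt
      (hcount n)).cons a

theorem KSstep_le_KSstep_general (α β : List ℕ)
    (hα : List.Pairwise (· ≥ ·) α) (m : ℕ)
    (hle : CNFLe α β) (hmc : MC α < m) :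
    CNFLe (KSstep α m) (KSstep β m) := by
  rcases hle with rfl | hlex
  · exact Or.inl rfl
  · exact KSstep_le_KSstep_of_lex hα (fun n => (count_le_MC α n).trans_lt hmc) hlex

/-- Let `α, β < ω^ω` and `m ∈ ℕ`. If `α ≤ β` and `MC(α) < m`, then `α[m] ≤ β[m]`. -/
theorem KSstep_le_KSstep (α β : List ℕ)
    (hα : List.Pairwise (· ≥ ·) α) (hβ : List.Pairwise (· ≥ ·) β) (m : ℕ)
    (hle : CNFLe α β) (hmc : MC α < m) :
    CNFLe (KSstep α m) (KSstep β m) :=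
  KSstep_le_KSstep_general α β hα m hle hmc
end

section
/- Let α < ω^ω and let X = {x_0 < ⋯ < x_{ℓ-1}} and Y = {y_0 < ⋯ < y_{ℓ'-1}} be finite subsets of ℕ with ℓ ≤ ℓ'. If y_i ≤ x_i for each i < ℓ and X is α-large, then Y is α-large. In particular, if X is α-large and X ⊆ Y, then Y is α-large. -/
/-! Say that an exponent list `l` is `SublistLE` an exponent list `L` when `l` is bounded termwise
by a subsequence of `L`. Run the descents `α[x₀][x₁]⋯` and `α[y₀][y₁]⋯` side by side, keeping the
current `Y`-term `SublistLE` the current `X`-term. If the embedding does not use the last exponent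
of the `X`-term, the `X`-step keeps the invariant on its own and `Y` waits: its pending `y` is
still below the next element of `X`, which is larger. Otherwise both step, and `y ≤ x` keeps the
invariant because `ω^d·y` is `SublistLE` `ω^e·x` for `d ≤ e`. Once the `X`-term is `0`, so is the
`Y`-term. For `X ⊆ Y`, the `i`-th element of `Y` is at most the `i`-th element of `X`. -/

namespace List

variable {β : Type*} [Preorder β]

def SublistLE (l L : List β) : Prop := ∃ M, M.Sublist L ∧ Forall₂ (· ≤ ·) l M

namespace SublistLE

theorem refl (L : List β) : SublistLE L L := ⟨L, .refl L, forall₂_refl L⟩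

theorem nil_left (L : List β) : SublistLE [] L := ⟨[], L.nil_sublist, .nil⟩

theorem eq_nil {l : List β} (h : SublistLE l []) : l = [] := by
  obtain ⟨M, hM, hlM⟩ := h
  rw [sublist_nil.1 hM] at hlM
  exact forall₂_nil_right_iff.1 hlM

theorem append {l L r R : List β} (hl : SublistLE l L) (hr : SublistLE r R) :
    SublistLE (l ++ r) (L ++ R) :=
  let ⟨M, hM, hlM⟩ := hl
  let ⟨N, hN, hrN⟩ := hr
  ⟨M ++ N, hM.append hN, rel_append hlM hrN⟩

theorem append_right {l L : List β} (h : SublistLE l L) (R : List β) : SublistLE l (L ++ R) :=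
  let ⟨M, hM, hlM⟩ := h
  ⟨M, hM.trans (L.sublist_append_left R), hlM⟩

theorem replicate {m n : ℕ} {a b : β} (hmn : m ≤ n) (hab : a ≤ b) :
    SublistLE (List.replicate m a) (List.replicate n b) :=
  ⟨List.replicate m b, (replicate_sublist_replicate b).2 hmn,
    forall₂_iff_get.2 ⟨by simp, by simp [hab]⟩⟩

theorem of_append_singleton {l R : List β} {c : β} (h : SublistLE l (R ++ [c])) :
    SublistLE l R ∨ ∃ r c', l = r ++ [c'] ∧ c' ≤ c ∧ SublistLE r R := by
  obtain ⟨M, hM, hlM⟩ := h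
  obtain ⟨M₁, M₂, rfl, hM₁, hM₂⟩ := sublist_append_iff.1 hM
  rcases sublist_cons_iff.1 hM₂ with hM₂ | ⟨N, rfl, hN⟩
  · rw [sublist_nil.1 hM₂, append_nil] at hlM
    exact Or.inl ⟨M₁, hM₁, hlM⟩
  · rw [sublist_nil.1 hN] at hlM
    obtain ⟨c', _, hc, hnil, hdrop⟩ :=
      forall₂_cons_right_iff.1 (forall₂_drop_append _ _ _ hlM)
    refine Or.inr ⟨_, c', ?_, hc, M₁, hM₁, forall₂_take_append _ _ _ hlM⟩
    have hsplit := (take_append_drop M₁.length l).symm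
    rwa [hdrop, forall₂_nil_right_iff.1 hnil] at hsplit

end SublistLE

def PrefixLE (ys xs : List β) : Prop := Forall₂ (· ≤ ·) (ys.take xs.length) xs

theorem prefixLE_nil_right (ys : List β) : PrefixLE ys [] := by simp [PrefixLE]

@[simp]
theorem prefixLE_cons_cons {x y : β} {xs ys : List β} :
    PrefixLE (y :: ys) (x :: xs) ↔ y ≤ x ∧ PrefixLE ys xs := by
  simp [PrefixLE]

theorem PrefixLE.of_cons_right {x : β} {xs ys : List β} (h : PrefixLE ys (x :: xs))
    (hxs : (x :: xs).Pairwise (· ≤ ·)) : PrefixLE ys xs := by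
  induction xs generalizing x ys with
  | nil => exact prefixLE_nil_right ys
  | cons x' xs ih =>
    obtain _ | ⟨y, ys⟩ := ys
    · simp [PrefixLE] at h
    obtain ⟨hyx, h⟩ := prefixLE_cons_cons.1 h
    exact prefixLE_cons_cons.2 ⟨hyx.trans (rel_of_pairwise_cons hxs (by simp)), ih h hxs.of_cons⟩

theorem PrefixLE.cons_left {y : β} {xs ys : List β} (h : PrefixLE ys xs)
    (hys : (y :: ys).Pairwise (· ≤ ·)) : PrefixLE (y :: ys) xs := by
  induction xs generalizing y ys with
  | nil => exact prefixLE_nil_right _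
  | cons x xs ih =>
    obtain _ | ⟨y', ys⟩ := ys
    · simp [PrefixLE] at h
    obtain ⟨hyx, h⟩ := prefixLE_cons_cons.1 h
    exact prefixLE_cons_cons.2 ⟨(rel_of_pairwise_cons hys (by simp)).trans hyx, ih h hys.of_cons⟩

theorem prefixLE_of_sublist {xs ys : List β} (h : xs.Sublist ys) (hys : ys.Pairwise (· ≤ ·)) :
    PrefixLE ys xs := by
  induction h with
  | slnil => exact prefixLE_nil_right []
  | cons y _ ih => exact (ih hys.of_cons).cons_left hys
  | cons_cons y _ ih => exact prefixLE_cons_cons.2 ⟨le_rfl, ih hys.of_cons⟩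

theorem prefixLE_of_getD {xs ys : List β} (d : β) (hlen : xs.length ≤ ys.length)
    (h : ∀ i < xs.length, ys.getD i d ≤ xs.getD i d) : PrefixLE ys xs := by
  refine forall₂_iff_get.2 ⟨by simpa using hlen, fun i hi₁ hi₂ => ?_⟩
  simpa [getD_eq_getElem, hi₂, (hi₂.trans_le hlen)] using h i hi₂

end List

theorem Finset.prefixLE_sort_of_subset {β : Type*} [LinearOrder β] {X Y : Finset β}
    (h : X ⊆ Y) : (Y.sort (· ≤ ·)).PrefixLE (X.sort (· ≤ ·)) := by
  refine List.prefixLE_of_sublist ?_ (Y.pairwise_sort _)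
  refine List.sublist_of_subperm_of_pairwise (r := (· ≤ ·)) ?_ (X.pairwise_sort _)
    (Y.pairwise_sort _)
  exact List.subperm_of_subset (X.sort_nodup _) fun z => by simpa using @h z

theorem KSstep_append_singleton (R : List ℕ) (c m : ℕ) :
    KSstep (R ++ [c]) m = R ++ KSstep [c] m := by
  induction R with
  | nil => rfl
  | cons a R ih =>
    obtain ⟨b, t, hbt⟩ := List.exists_cons_of_ne_nil (List.append_ne_nil_of_right_ne_nil R
      (List.cons_ne_nil c []))
    rw [List.cons_append, hbt, KSstep, ← hbt, ih, List.cons_append]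

theorem sublistLE_KSstep_singleton {c c' x y : ℕ} (hc : c' ≤ c) (hyx : y ≤ x) :
    (KSstep [c'] y).SublistLE (KSstep [c] x) := by
  obtain _ | d := c'
  · exact List.SublistLE.nil_left _
  obtain _ | e := c
  · omega
  exact List.SublistLE.replicate hyx (by omega)

theorem List.SublistLE.KSstep {l L : List ℕ} (h : l.SublistLE L) {x y : ℕ} (hyx : y ≤ x) :
    l.SublistLE (_root_.KSstep L x) ∨ (_root_.KSstep l y).SublistLE (_root_.KSstep L x) := by
  rcases L.eq_nil_or_concat with rfl | ⟨R, c, rfl⟩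
  · exact Or.inl (h.eq_nil ▸ nil_left _)
  rw [List.concat_eq_append] at h ⊢
  rw [KSstep_append_singleton]
  rcases h.of_append_singleton with h | ⟨r, c', rfl, hc, hr⟩
  · exact Or.inl (h.append_right _)
  · rw [KSstep_append_singleton]
    exact Or.inr (hr.append (sublistLE_KSstep_singleton hc hyx))

theorem foldl_KSstep_eq_nil_of_sublistLE {xs ys l L : List ℕ} (hxs : xs.Pairwise (· ≤ ·))
    (hyx : ys.PrefixLE xs) (hlL : l.SublistLE L) (hL : xs.foldl KSstep L = []) :
    ys.foldl KSstep l = [] := by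
  induction xs generalizing ys l L with
  | nil =>
    rw [(hL ▸ hlL : l.SublistLE []).eq_nil]
    exact List.foldl_fixed' (fun _ => rfl) ys
  | cons x xs ih =>
    obtain _ | ⟨y, ys⟩ := ys
    · simp [List.PrefixLE] at hyx
    rw [List.foldl_cons] at hL
    rcases hlL.KSstep (List.prefixLE_cons_cons.1 hyx).1 with hwait | hstep
    · exact ih hxs.of_cons (hyx.of_cons_right hxs) hwait hL
    · rw [List.foldl_cons]
      exact ih hxs.of_cons (List.prefixLE_cons_cons.1 hyx).2 hstep hL

theorem IsLarge.of_prefixLE {α : List ℕ} {X Y : Finset ℕ} (hX : IsLarge α X)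
    (h : (Y.sort (· ≤ ·)).PrefixLE (X.sort (· ≤ ·))) : IsLarge α Y :=
  foldl_KSstep_eq_nil_of_sublistLE (X.pairwise_sort _) h (.refl α) hX

/-- Let `α < ω^ω` and let `X = {x₀ < ⋯ < x_{ℓ-1}}`, `Y = {y₀ < ⋯ < y_{ℓ'-1}}` be finite
subsets of `ℕ` with `ℓ ≤ ℓ'`. If `y_i ≤ x_i` for each `i < ℓ` and `X` is `α`-large,
then `Y` is `α`-large. In particular, if `X` is `α`-large and `X ⊆ Y`, then `Y` is
`α`-large. -/
theorem isLarge_of_pointwise_le (α : List ℕ) :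
    (∀ X Y : Finset ℕ, X.card ≤ Y.card →
      (∀ i < X.card, (Y.sort (· ≤ ·)).getD i 0 ≤ (X.sort (· ≤ ·)).getD i 0) →
      IsLarge α X → IsLarge α Y) ∧
    (∀ X Y : Finset ℕ, X ⊆ Y → IsLarge α X → IsLarge α Y) :=
  ⟨fun X Y hcard hle hX =>
    hX.of_prefixLE (List.prefixLE_of_getD 0 (by simpa using hcard) (by simpa using hle)),
   fun _ _ hXY hX => hX.of_prefixLE (Finset.prefixLE_sort_of_subset hXY)⟩
end

section
/- Every ω^3-sparse finite set X ⊆ ℕ with min X ≥ 3 is exp-sparse. More precisely, for natural numbers 3 ≤ x < y: if the interval (x, y] is ω-large then y > 2x; if (x, y] is ω^2-large then y > x·2^x; and if (x, y] is ω^3-large then y > 4^x. -/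
/-- A finite set `X ⊆ ℕ` (with `min X ≥ 3`) is exp-sparse if for all `x, y ∈ X`,
`x < y` implies `4^x < y`. -/
def ExpSparse (X : Finset ℕ) : Prop :=
  (∀ x ∈ X, 3 ≤ x) ∧ ∀ x ∈ X, ∀ y ∈ X, x < y → 4 ^ x < y

/-- A finite set `X ⊆ ℕ` is `α`-sparse if for all `x, y ∈ X` with `x < y`,
the interval `(x, y]` is `α`-large. -/
def SparseFor (α : List ℕ) (X : Finset ℕ) : Prop :=
  ∀ x ∈ X, ∀ y ∈ X, x < y → IsLarge α (Finset.Ioc x y)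
/-
The least `y` for which `(a, y]` is `ω^k`-large is `largeEnd k a`, where `largeEnd 0 a = a + 1` and
`largeEnd (k + 1) a = (largeEnd k)^[a + 1] (a + 1)`: the first element `a + 1` of the interval turns
`ω^(k+1)` into `ω^k · (a + 1)`, and the `a + 1` copies of `ω^k` are then used up one after the other,
each one unaffected by the terms in front of it. Hence `largeEnd 1 a = 2a + 2`,
`largeEnd 2 a = 2^(a+1)·(a + 3) - 2`, and already two of the `x + 1` iterations of `largeEnd 2`
making up `largeEnd 3 x` exceed `4^x`.
-/

theorem KSstep_append (β : List ℕ) {γ : List ℕ} (hγ : γ ≠ []) (m : ℕ) :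
    KSstep (β ++ γ) m = β ++ KSstep γ m := by
  induction β with
  | nil => rfl
  | cons a β ih =>
    obtain ⟨b, l, hbl⟩ := List.exists_cons_of_ne_nil (List.append_ne_nil_of_right_ne_nil β hγ)
    rw [List.cons_append, hbl, KSstep, ← hbl, ih, List.cons_append]

/-- `ksRun α a y = α[a+1][a+2]⋯[y]`. -/
def ksRun (α : List ℕ) (a y : ℕ) : List ℕ :=
  (List.range' (a + 1) (y - a)).foldl KSstep α

theorem Nat.sort_Ioc (a y : ℕ) :
    (Finset.Ioc a y).sort (· ≤ ·) = List.range' (a + 1) (y - a) := by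
  rw [Nat.Ioc_eq_range']
  exact (Multiset.coe_sort _ _).trans
    (List.mergeSort_eq_self _ ((List.pairwise_lt_range' 1).imp le_of_lt))

theorem isLarge_Ioc_iff (α : List ℕ) (a y : ℕ) :
    IsLarge α (Finset.Ioc a y) ↔ ksRun α a y = [] := by
  rw [IsLarge, Nat.sort_Ioc, ksRun]

namespace ksRun

theorem of_le (α : List ℕ) {a y : ℕ} (h : y ≤ a) : ksRun α a y = α := by
  simp [ksRun, Nat.sub_eq_zero_of_le h]

theorem succ (α : List ℕ) {a y : ℕ} (h : a ≤ y) :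
    ksRun α a (y + 1) = KSstep (ksRun α a y) (y + 1) := by
  rw [ksRun, ksRun, Nat.sub_add_comm h, List.range'_concat, List.foldl_concat,
    show a + 1 + 1 * (y - a) = y + 1 by omega]

theorem nil (a y : ℕ) : ksRun [] a y = [] :=
  List.foldl_fixed' (fun _ => rfl) _

theorem trans (α : List ℕ) {a b y : ℕ} (hab : a ≤ b) (hby : b ≤ y) :
    ksRun α a y = ksRun (ksRun α a b) b y := by
  induction y, hby using Nat.le_induction with
  | base => rw [of_le _ le_rfl]
  | succ y hby ih => rw [succ _ (hab.trans hby), succ _ hby, ih]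

theorem append (β : List ℕ) {γ : List ℕ} {a y : ℕ} (hγ : ∀ z < y, ksRun γ a z ≠ []) :
    ksRun (β ++ γ) a y = β ++ ksRun γ a y := by
  induction y with
  | zero => rw [of_le _ (Nat.zero_le a), of_le _ (Nat.zero_le a)]
  | succ y ih =>
    rcases Nat.lt_or_ge y a with hya | hay
    · rw [of_le _ hya, of_le _ hya]
    · rw [succ _ hay, succ _ hay, ih fun z hz => hγ z (by omega),
        KSstep_append _ (hγ y (by omega))]

end ksRun

def largeEnd : ℕ → ℕ → ℕ
  | 0, a => a + 1
  | k + 1, a => (largeEnd k)^[a + 1] (a + 1)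

theorem lt_largeEnd (k a : ℕ) : a < largeEnd k a := by
  induction k generalizing a with
  | zero => exact Nat.lt_succ_self a
  | succ k ih =>
    exact (Nat.lt_succ_self a).trans_le
      (Function.id_le_iterate_of_id_le (fun b => (ih b).le) (a + 1) (a + 1))

theorem le_iterate_largeEnd (k n a : ℕ) : a ≤ (largeEnd k)^[n] a :=
  Function.id_le_iterate_of_id_le (fun b => (lt_largeEnd k b).le) n a

theorem ksRun_replicate_eq_nil_iff {k : ℕ} (hk : ∀ a y, ksRun [k] a y = [] ↔ largeEnd k a ≤ y)
    (n : ℕ) {a y : ℕ} (hay : a ≤ y) :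
    ksRun (List.replicate n k) a y = [] ↔ (largeEnd k)^[n] a ≤ y := by
  induction n generalizing a with
  | zero => simpa [ksRun.nil] using hay
  | succ n ih =>
    have hne : ∀ z < largeEnd k a, ksRun [k] a z ≠ [] := fun z hz h =>
      absurd ((hk a z).1 h) (Nat.not_le_of_lt hz)
    rw [List.replicate_succ', Function.iterate_succ_apply]
    by_cases hy : largeEnd k a ≤ y
    · rw [ksRun.trans _ (lt_largeEnd k a).le hy, ksRun.append _ hne, (hk _ _).2 le_rfl,
        List.append_nil, ih hy]
    · rw [ksRun.append _ fun z hz => hne z (by omega)]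
      have := le_iterate_largeEnd k n (largeEnd k a)
      simp only [List.append_eq_nil_iff, hne y (by omega), and_false, false_iff]
      omega

theorem ksRun_singleton_eq_nil_iff (k a y : ℕ) : ksRun [k] a y = [] ↔ largeEnd k a ≤ y := by
  rcases Nat.lt_or_ge a y with hay | hya
  · rw [ksRun.trans _ (Nat.le_succ a) hay, ksRun.succ _ le_rfl, ksRun.of_le _ le_rfl]
    cases k with
    | zero => simpa [KSstep, ksRun.nil, largeEnd] using hay
    | succ k => exact ksRun_replicate_eq_nil_iff (ksRun_singleton_eq_nil_iff k) _ hay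
  · have := lt_largeEnd k a
    rw [ksRun.of_le _ hya]
    simp only [reduceCtorEq, false_iff]
    omega

theorem isLarge_Ioc_singleton_iff (k a y : ℕ) :
    IsLarge [k] (Finset.Ioc a y) ↔ largeEnd k a ≤ y := by
  rw [isLarge_Ioc_iff, ksRun_singleton_eq_nil_iff]

theorem largeEnd_one (a : ℕ) : largeEnd 1 a = 2 * a + 2 := by
  have : largeEnd 0 = Nat.succ := rfl
  rw [largeEnd, this, Nat.succ_iterate]
  ring

theorem iterate_largeEnd_one_add_two (n b : ℕ) :
    (largeEnd 1)^[n] b + 2 = 2 ^ n * (b + 2) := by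
  induction n with
  | zero => simp
  | succ n ih =>
    rw [Function.iterate_succ_apply', largeEnd_one, pow_succ]
    linarith

theorem largeEnd_two_add_two (a : ℕ) : largeEnd 2 a + 2 = 2 ^ (a + 1) * (a + 3) := by
  rw [largeEnd, iterate_largeEnd_one_add_two]

theorem two_pow_lt_largeEnd_two (a : ℕ) : 2 ^ (a + 1) < largeEnd 2 a := by
  have := largeEnd_two_add_two a
  have : 2 ≤ 2 ^ (a + 1) := Nat.le_self_pow (Nat.succ_ne_zero a) 2
  nlinarith

theorem four_pow_lt_largeEnd_three (x : ℕ) : 4 ^ x < largeEnd 3 x := by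
  cases x with
  | zero => decide
  | succ n =>
    have hf : largeEnd 3 (n + 1) = (largeEnd 2)^[n] (largeEnd 2 (largeEnd 2 (n + 2))) := by
      rw [largeEnd, Function.iterate_succ_apply, Function.iterate_succ_apply]
    have : 2 * (n + 1) < largeEnd 2 (n + 2) := by
      have := two_pow_lt_largeEnd_two (n + 2)
      have : 2 ^ (n + 2 + 1) = 8 * 2 ^ n := by ring
      have : n < 2 ^ n := Nat.lt_two_pow_self
      omega
    calc 4 ^ (n + 1) = 2 ^ (2 * (n + 1)) := by rw [pow_mul]; norm_num
      _ < 2 ^ (largeEnd 2 (n + 2) + 1) := Nat.pow_lt_pow_right (by norm_num) (by omega)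
      _ < largeEnd 2 (largeEnd 2 (n + 2)) := two_pow_lt_largeEnd_two _
      _ ≤ largeEnd 3 (n + 1) := hf ▸ le_iterate_largeEnd 2 n _

/-- Every `ω³`-sparse finite set `X ⊆ ℕ` with `min X ≥ 3` is exp-sparse.  More
precisely, for natural numbers `3 ≤ x < y`: if the interval `(x, y]` is `ω`-large then
`y > 2x`; if `(x, y]` is `ω²`-large then `y > x·2^x`; and if `(x, y]` is `ω³`-large
then `y > 4^x`. -/
theorem expSparse_of_sparse_omega_cube :
    (∀ X : Finset ℕ, (∀ x ∈ X, 3 ≤ x) → SparseFor [3] X → ExpSparse X) ∧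
    (∀ x y : ℕ, 3 ≤ x → x < y → IsLarge [1] (Finset.Ioc x y) → 2 * x < y) ∧
    (∀ x y : ℕ, 3 ≤ x → x < y → IsLarge [2] (Finset.Ioc x y) → x * 2 ^ x < y) ∧
    (∀ x y : ℕ, 3 ≤ x → x < y → IsLarge [3] (Finset.Ioc x y) → 4 ^ x < y) := by
  have omega_cube (x y : ℕ) (h : IsLarge [3] (Finset.Ioc x y)) : 4 ^ x < y :=
    (four_pow_lt_largeEnd_three x).trans_le ((isLarge_Ioc_singleton_iff 3 x y).1 h)
  refine ⟨fun X hX hsparse => ⟨hX, fun x hx y hy hxy => omega_cube x y (hsparse x hx y hy hxy)⟩,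
    fun x y _ _ h => ?_, fun x y _ _ h => ?_, fun x y _ _ h => omega_cube x y h⟩
  · have := (isLarge_Ioc_singleton_iff 1 x y).1 h
    rw [largeEnd_one] at this
    omega
  · have := (isLarge_Ioc_singleton_iff 2 x y).1 h
    have := largeEnd_two_add_two x
    have : 1 ≤ 2 ^ x := Nat.one_le_two_pow
    nlinarith [pow_succ 2 x]
end

section
/- Let n, m ∈ ℕ. If X ⊆ ℕ is a finite set which is (ω^{n+m}+1)-large and min X ≥ 3, then there exists Y ⊆ X such that Y is ω^n-large and ω^m-sparse. In particular, if X is (ω^{n+3}+1)-large and min X ≥ 3, then there exists Y ⊆ X such that Y is ω^n-large and exp-sparse. -/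
/-!
Two facts about the fundamental sequences carry the argument. Largeness is preserved by enlarging
the set, because `α[x]` reaches `α[z]` for `z ≤ x` through steps `·[x']` with `x' ≤ x`; and an
`(α + β)`-large set (`α ++ β` as a list) splits into a `β`-large part followed by an `α`-large part.

The guard `h` in `HasSparseSubsets` stands for the element chosen last: `insert h Y` is
`ω^k·c`-large iff `Y` is `(ω^k·c)[h]`-large. One round of the induction spends an `ω^(k+m)` block;
its minimum `B ≥ h + 4` leaves `B` blocks of type `ω^(k+m-1)`, of which it uses a gap block, a
block headed by the next element `y`, `h` blocks on which the induction for `k - 1` runs with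
guard `y`, then another gap block and a block headed by the guard of the next round. Everything
after a block headed by `y` exceeds `2y`, hence `y + 4`, as the next round needs. For `k = 0` one
element per `ω^m` block is enough. In the theorem the least element `x ≥ 3` of `X` is the first
guard, and one level further down the rest of `X` provides the gap and head `y > x` after which
the induction takes over.

An `ω^3`-large interval `(x, y]` contains two consecutive `ω^2`-large intervals, and an
`ω^2`-large interval `(a, b]` has `b ≥ 2^(a+1)`; hence `y > 4^x`.
-/

section KSstep

open List

theorem ksstep_nil (x : ℕ) : KSstep [] x = [] := rfl

theorem ksstep_singleton_zero (x : ℕ) : KSstep [0] x = [] := rfl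

theorem ksstep_singleton_succ (k x : ℕ) : KSstep [k + 1] x = replicate x k := rfl

theorem ksstep_singleton_arg_zero (a : ℕ) : KSstep [a] 0 = [] := by
  cases a <;> rfl

theorem ksstep_cons {γ : List ℕ} (hγ : γ ≠ []) (a x : ℕ) :
    KSstep (a :: γ) x = a :: KSstep γ x := by
  obtain ⟨b, l, rfl⟩ := exists_cons_of_ne_nil hγ
  cases a <;> rfl

theorem ksstep_append (α : List ℕ) {β : List ℕ} (hβ : β ≠ []) (x : ℕ) :
    KSstep (α ++ β) x = α ++ KSstep β x := by
  induction α with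
  | nil => rfl
  | cons a α ih => rw [cons_append, ksstep_cons (by simp [hβ]), ih, cons_append]

theorem ksstep_concat (γ : List ℕ) (a x : ℕ) : KSstep (γ ++ [a]) x = γ ++ KSstep [a] x :=
  ksstep_append γ (cons_ne_nil a []) x

theorem ksstep_replicate_succ (c a x : ℕ) :
    KSstep (replicate (c + 1) a) x = replicate c a ++ KSstep [a] x := by
  rw [replicate_succ', ksstep_concat]

theorem length_le_length_ksstep_add_one (γ : List ℕ) (x : ℕ) :
    γ.length ≤ (KSstep γ x).length + 1 := by
  rcases eq_nil_or_concat' γ with rfl | ⟨γ, a, rfl⟩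
  · simp
  · simp [ksstep_concat]

end KSstep

def KSReach (y : ℕ) : List ℕ → List ℕ → Prop :=
  Relation.ReflTransGen fun γ δ => ∃ x ≤ y, δ = KSstep γ x

namespace KSReach

open List

variable {y : ℕ}

theorem refl (γ : List ℕ) : KSReach y γ γ := Relation.ReflTransGen.refl

theorem step {γ : List ℕ} {x : ℕ} (hx : x ≤ y) : KSReach y γ (KSstep γ x) :=
  Relation.ReflTransGen.single ⟨x, hx, rfl⟩

theorem append_left (γ δ : List ℕ) : KSReach y (γ ++ δ) γ := by
  induction δ generalizing γ with
  | nil => simpa using refl γ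
  | cons a δ ih =>
    have hdrop : KSstep (γ ++ [a]) 0 = γ := by
      rw [ksstep_concat, ksstep_singleton_arg_zero, append_nil]
    have h : KSReach y (γ ++ [a] ++ δ) (KSstep (γ ++ [a]) 0) := (ih _).trans (step y.zero_le)
    rwa [hdrop, append_assoc, singleton_append] at h

theorem eq_nil {δ : List ℕ} (h : KSReach y [] δ) : δ = [] := by
  induction h with
  | refl => rfl
  | tail _ hs ih => obtain ⟨x, -, rfl⟩ := hs; rw [ih, ksstep_nil]

theorem ksstep_of_le (γ : List ℕ) {z x : ℕ} (hzx : z ≤ x) :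
    KSReach x (KSstep γ x) (KSstep γ z) := by
  rcases eq_nil_or_concat' γ with rfl | ⟨γ, a, rfl⟩
  · exact refl []
  rw [ksstep_concat, ksstep_concat]
  cases a with
  | zero => exact refl _
  | succ k =>
    rw [ksstep_singleton_succ, ksstep_singleton_succ, ← Nat.add_sub_cancel' hzx, replicate_add,
      ← append_assoc]
    exact append_left _ _

theorem ksstep {γ δ : List ℕ} (h : KSReach y γ δ) {x : ℕ} (hyx : y ≤ x) :
    KSReach x (KSstep γ x) (KSstep δ x) := by
  induction h with
  | refl => exact refl _
  | tail _ hs ih =>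
    obtain ⟨z, hz, rfl⟩ := hs
    exact ih.trans ((ksstep_of_le _ (hz.trans hyx)).trans (step le_rfl))

end KSReach

open Finset
open List (replicate)

section IsLarge

variable {α β : List ℕ} {X Y P Q : Finset ℕ}

theorem isLarge_empty_iff : IsLarge α ∅ ↔ α = [] := by
  simp [IsLarge]

theorem isLarge_nil (X : Finset ℕ) : IsLarge [] X := by
  unfold IsLarge
  induction X.sort (· ≤ ·) with
  | nil => rfl
  | cons x L ih => exact ih

theorem isLarge_insert_iff {x : ℕ} (hx : ∀ y ∈ X, x < y) :
    IsLarge α (insert x X) ↔ IsLarge (KSstep α x) X := by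
  unfold IsLarge
  rw [sort_insert _ (fun y hy => (hx y hy).le) (fun h => lt_irrefl x (hx x h))]
  rfl

theorem IsLarge.nonempty (h : IsLarge α X) (hα : α ≠ []) : X.Nonempty :=
  nonempty_iff_ne_empty.2 fun hX => hα (isLarge_empty_iff.1 (hX ▸ h))

theorem IsLarge.exists_insert (h : IsLarge α X) (hα : α ≠ []) :
    ∃ x X', X = insert x X' ∧ (∀ y ∈ X', x < y) ∧ IsLarge (KSstep α x) X' := by
  induction X using Finset.induction_on_min with
  | empty => exact absurd (isLarge_empty_iff.1 h) hα
  | insert x X' hx _ => exact ⟨x, X', rfl, hx, (isLarge_insert_iff hx).1 h⟩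

theorem isLarge_zero_of_nonempty (hX : X.Nonempty) : IsLarge [0] X := by
  induction X using Finset.induction_on_min with
  | empty => exact absurd hX not_nonempty_empty
  | insert x X hx _ => rw [isLarge_insert_iff hx, ksstep_singleton_zero]; exact isLarge_nil X

theorem IsLarge.length_le_card (h : IsLarge α X) : α.length ≤ X.card := by
  induction X using Finset.induction_on_min generalizing α with
  | empty => simp [isLarge_empty_iff.1 h]
  | insert x X hx ih =>
    rw [card_insert_of_notMem fun hxX => lt_irrefl x (hx x hxX)]
    have := length_le_length_ksstep_add_one α x
    have := ih ((isLarge_insert_iff hx).1 h)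
    omega

theorem IsLarge.of_ksReach {y : ℕ} (h : IsLarge α X) (hαβ : KSReach y α β)
    (hy : ∀ z ∈ X, y ≤ z) : IsLarge β X := by
  induction X using Finset.induction_on_min generalizing y α β with
  | empty => rw [isLarge_empty_iff] at h ⊢; exact (h ▸ hαβ).eq_nil
  | insert x X hx ih =>
    rw [isLarge_insert_iff hx] at h ⊢
    exact ih h (hαβ.ksstep (hy x (mem_insert_self x X))) fun z hz => (hx z hz).le

theorem IsLarge.ksstep_of_le {y : ℕ} (h : IsLarge α X) (hy : ∀ z ∈ X, y ≤ z) :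
    IsLarge (KSstep α y) X :=
  h.of_ksReach (KSReach.step le_rfl) hy

theorem IsLarge.mono (h : IsLarge α X) (hXY : X ⊆ Y) : IsLarge α Y := by
  induction Y using Finset.induction_on_min generalizing X α with
  | empty => rwa [subset_empty.1 hXY] at h
  | insert y Y hy ih =>
    rw [isLarge_insert_iff hy]
    by_cases hyX : y ∈ X
    · have hsub : X.erase y ⊆ Y := fun z hz =>
        (mem_insert.1 (hXY (mem_of_mem_erase hz))).resolve_left (ne_of_mem_erase hz)
      rw [← insert_erase hyX, isLarge_insert_iff fun z hz => hy z (hsub hz)] at h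
      exact ih h hsub
    · have hsub : X ⊆ Y := fun z hz =>
        (mem_insert.1 (hXY hz)).resolve_left (ne_of_mem_of_not_mem hz hyX)
      exact (ih h hsub).ksstep_of_le fun z hz => (hy z hz).le

theorem IsLarge.exists_split (h : IsLarge (α ++ β) X) :
    ∃ P ⊆ X, ∃ Q ⊆ X, (∀ p ∈ P, ∀ q ∈ Q, p < q) ∧ IsLarge β P ∧ IsLarge α Q := by
  induction X using Finset.induction_on_min generalizing β with
  | empty =>
    obtain ⟨rfl, rfl⟩ := List.append_eq_nil_iff.1 (isLarge_empty_iff.1 h)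
    exact ⟨∅, empty_subset _, ∅, empty_subset _, by simp, isLarge_nil _, isLarge_nil _⟩
  | insert x X hx ih =>
    rcases eq_or_ne β [] with rfl | hβ
    · exact ⟨∅, empty_subset _, _, subset_rfl, by simp, isLarge_nil _, by simpa using h⟩
    rw [isLarge_insert_iff hx, ksstep_append α hβ] at h
    obtain ⟨P, hPX, Q, hQX, hPQ, hP, hQ⟩ := ih h
    refine ⟨insert x P, insert_subset_insert x hPX, Q, hQX.trans (subset_insert x X), ?_,
      (isLarge_insert_iff fun y hy => hx y (hPX hy)).2 hP, hQ⟩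
    simp only [mem_insert, forall_eq_or_imp]
    exact ⟨fun q hq => hx q (hQX hq), hPQ⟩

theorem IsLarge.union (hPQ : ∀ p ∈ P, ∀ q ∈ Q, p < q) (hP : IsLarge β P) (hQ : IsLarge α Q) :
    IsLarge (α ++ β) (P ∪ Q) := by
  induction P using Finset.induction_on_min generalizing β with
  | empty => simpa [isLarge_empty_iff.1 hP] using hQ
  | insert x P hx ih =>
    rcases eq_or_ne β [] with rfl | hβ
    · simpa using hQ.mono (subset_union_right (s₁ := insert x P))
    have hxPQ : ∀ y ∈ P ∪ Q, x < y := by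
      simp only [mem_union]
      rintro y (hy | hy)
      exacts [hx y hy, hPQ x (mem_insert_self x P) y hy]
    rw [insert_union, isLarge_insert_iff hxPQ, ksstep_append α hβ]
    exact ih (fun p hp q hq => hPQ p (mem_insert_of_mem hp) q hq) ((isLarge_insert_iff hx).1 hP)

theorem IsLarge.of_append (h : IsLarge (α ++ β) X) : IsLarge α X := by
  obtain ⟨-, -, Q, hQX, -, -, hQ⟩ := h.exists_split
  exact hQ.mono hQX

theorem IsLarge.exists_split_replicate {a b j : ℕ} (h : IsLarge (replicate (a + b) j) X) :
    ∃ P ⊆ X, ∃ Q ⊆ X, (∀ p ∈ P, ∀ q ∈ Q, p < q) ∧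
      IsLarge (replicate a j) P ∧ IsLarge (replicate b j) Q := by
  rw [Nat.add_comm, List.replicate_add] at h
  exact h.exists_split

theorem IsLarge.replicate_of_le {a b j : ℕ} (h : IsLarge (replicate b j) X) (hab : a ≤ b) :
    IsLarge (replicate a j) X := by
  rw [← Nat.add_sub_cancel' hab, List.replicate_add] at h
  exact h.of_append

theorem IsLarge.of_le {i j : ℕ} (h : IsLarge [j] X) (hij : i ≤ j) : IsLarge [i] X := by
  induction j generalizing X with
  | zero => rwa [Nat.le_zero.1 hij]
  | succ j ih =>
    rcases hij.eq_or_lt with rfl | hij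
    · exact h
    obtain ⟨x, X, rfl, hx, hX⟩ := h.exists_insert (List.cons_ne_nil _ _)
    rw [ksstep_singleton_succ] at hX
    rw [isLarge_insert_iff hx]
    rcases x with _ | x
    · rw [ksstep_singleton_arg_zero]
      exact isLarge_nil X
    · exact (ih (hX.replicate_of_le (Nat.le_add_left 1 x)) (Nat.le_of_lt_succ hij)).ksstep_of_le
        fun z hz => (hx z hz).le

theorem IsLarge.two_mul_lt {j x z : ℕ} (hj : 0 < j) (h : IsLarge [j] (insert x X))
    (hx : ∀ y ∈ X, x < y) (hz : ∀ y ∈ insert x X, y < z) : 2 * x < z := by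
  obtain ⟨j, rfl⟩ := Nat.exists_eq_add_of_lt hj
  rw [isLarge_insert_iff hx, Nat.zero_add, ksstep_singleton_succ] at h
  have hcard : x ≤ X.card := by simpa using h.length_le_card
  have hsub : X ⊆ Ioo x z := fun y hy => mem_Ioo.2 ⟨hx y hy, hz y (mem_insert_of_mem hy)⟩
  have := card_le_card hsub
  have := hz x (mem_insert_self x X)
  simp only [Nat.card_Ioo] at *
  omega

end IsLarge

section Ioc

variable {α β : List ℕ} {a b : ℕ}

theorem lt_of_isLarge_Ioc (h : IsLarge α (Ioc a b)) (hα : α ≠ []) : a < b :=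
  nonempty_Ioc.1 (h.nonempty hα)

theorem isLarge_Ioc_iff_s6 (hab : a < b) :
    IsLarge α (Ioc a b) ↔ IsLarge (KSstep α (a + 1)) (Ioc (a + 1) b) := by
  rw [← insert_Ioc_add_one_left_eq_Ioc hab, isLarge_insert_iff fun y hy => (mem_Ioc.1 hy).1]

theorem IsLarge.exists_Ioc_split (h : IsLarge (α ++ β) (Ioc a b)) :
    ∃ d, IsLarge β (Ioc a d) ∧ IsLarge α (Ioc d b) := by
  obtain ⟨P, hP, Q, hQ, hPQ, hP', hQ'⟩ := h.exists_split
  refine ⟨P.sup id, hP'.mono fun p hp => mem_Ioc.2 ⟨(mem_Ioc.1 (hP hp)).1, le_sup (f := id) hp⟩,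
    hQ'.mono fun q hq => mem_Ioc.2 ⟨?_, (mem_Ioc.1 (hQ hq)).2⟩⟩
  exact (Finset.sup_lt_iff (Nat.zero_lt_of_lt (mem_Ioc.1 (hQ hq)).1)).2 fun p hp => hPQ p hp q hq

theorem two_mul_le_of_isLarge_Ioc_one (h : IsLarge [1] (Ioc a b)) : 2 * (a + 1) ≤ b := by
  rw [isLarge_Ioc_iff_s6 (lt_of_isLarge_Ioc h (by simp)), ksstep_singleton_succ] at h
  have := h.length_le_card
  simp only [List.length_replicate, Nat.card_Ioc] at this
  omega

theorem two_pow_mul_le_of_isLarge_Ioc_replicate_one (c : ℕ)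
    (h : IsLarge (replicate (c + 1) 1) (Ioc a b)) : 2 ^ (c + 1) * (a + 1) ≤ b := by
  induction c generalizing a with
  | zero => simpa using two_mul_le_of_isLarge_Ioc_one h
  | succ c ih =>
    rw [List.replicate_succ'] at h
    obtain ⟨d, had, hdb⟩ := h.exists_Ioc_split
    have := two_mul_le_of_isLarge_Ioc_one had
    calc 2 ^ (c + 2) * (a + 1) = 2 ^ (c + 1) * (2 * (a + 1)) := by ring
      _ ≤ 2 ^ (c + 1) * (d + 1) := Nat.mul_le_mul_left _ (by omega)
      _ ≤ b := ih hdb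

theorem two_pow_le_of_isLarge_Ioc_two (h : IsLarge [2] (Ioc a b)) : 2 ^ (a + 1) ≤ b := by
  rw [isLarge_Ioc_iff_s6 (lt_of_isLarge_Ioc h (by simp)), ksstep_singleton_succ] at h
  exact (Nat.le_mul_of_pos_right _ (a + 1).succ_pos).trans
    (two_pow_mul_le_of_isLarge_Ioc_replicate_one a h)

theorem four_pow_lt_of_isLarge_Ioc_three {x y : ℕ} (hx : 1 ≤ x) (h : IsLarge [3] (Ioc x y)) :
    4 ^ x < y := by
  rw [isLarge_Ioc_iff_s6 (lt_of_isLarge_Ioc h (by simp)), ksstep_singleton_succ] at h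
  obtain ⟨d, hxd, hdy⟩ := IsLarge.exists_Ioc_split (α := [2]) (β := [2])
    (h.replicate_of_le (a := 2) (by omega))
  have hd := two_pow_le_of_isLarge_Ioc_two hxd
  have : x < 2 ^ x := Nat.lt_two_pow_self
  calc 4 ^ x = 2 ^ (2 * x) := by rw [pow_mul]; norm_num
    _ < 2 ^ (d + 1) := Nat.pow_lt_pow_right (by norm_num) (by rw [pow_succ, pow_succ] at hd; omega)
    _ ≤ y := two_pow_le_of_isLarge_Ioc_two hdy

end Ioc

section SparseFor

variable {α : List ℕ} {A B : Finset ℕ}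

theorem sparseFor_singleton (α : List ℕ) (x : ℕ) : SparseFor α {x} := by
  intro a ha b hb hab
  rw [mem_singleton] at ha hb
  subst ha hb
  exact absurd hab (lt_irrefl _)

theorem SparseFor.union_of_le {g : ℕ} (hα : α ≠ []) (hA : SparseFor α A) (hB : SparseFor α B)
    (hAg : ∀ a ∈ A, IsLarge α (Ioc a g)) (hgB : ∀ b ∈ B, g ≤ b) : SparseFor α (A ∪ B) := by
  intro x hx y hy hxy
  rcases mem_union.1 hx with hx | hx <;> rcases mem_union.1 hy with hy | hy
  · exact hA x hx y hy hxy
  · exact (hAg x hx).mono (Ioc_subset_Ioc_right (hgB y hy))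
  · exact absurd hxy ((lt_of_isLarge_Ioc (hAg y hy) hα).trans_le (hgB x hx)).asymm
  · exact hB x hx y hy hxy

theorem SparseFor.insert_of_le {h g : ℕ} (hα : α ≠ []) (hA : SparseFor α A)
    (hhg : IsLarge α (Ioc h g)) (hgA : ∀ b ∈ A, g ≤ b) : SparseFor α (insert h A) := by
  rw [insert_eq]
  exact (sparseFor_singleton α h).union_of_le hα hA (by simpa using hhg) hgA

end SparseFor

theorem IsLarge.exists_head {j : ℕ} {P : Finset ℕ} (hj : 0 < j) (h : IsLarge (replicate 2 j) P) :
    ∃ y ∈ P, (∀ a, (∀ x ∈ P, a < x) → IsLarge [j] (Ioc a y)) ∧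
      ∀ z, (∀ x ∈ P, x < z) → 2 * y < z := by
  obtain ⟨G, hGP, H, hHP, hGH, hG, hH⟩ := h.exists_split_replicate (a := 1) (b := 1)
  obtain ⟨y, H, rfl, hy, -⟩ := hH.exists_insert (List.cons_ne_nil _ _)
  refine ⟨y, hHP (mem_insert_self y H), fun a ha => hG.mono fun g hg => ?_, fun z hz => ?_⟩
  · exact mem_Ioc.2 ⟨ha g (hGP hg), (hGH g hg y (mem_insert_self y H)).le⟩
  · exact hH.two_mul_lt hj hy fun x hx => hz x (hHP hx)

theorem IsLarge.exists_two_heads {j h : ℕ} {Q : Finset ℕ} (hj : 0 < j)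
    (hQ : IsLarge (replicate (h + 4) j) Q) (hhQ : ∀ x ∈ Q, h < x) :
    ∃ y ∈ Q, ∃ M ⊆ Q, ∃ y₂ ∈ Q, IsLarge [j] (Ioc h y) ∧ (∀ x ∈ M, 2 * y < x) ∧
      IsLarge (replicate h j) M ∧ (∀ x ∈ insert y M, IsLarge [j] (Ioc x y₂)) ∧
      ∀ z, (∀ x ∈ Q, x < z) → 2 * y₂ < z := by
  rw [show h + 4 = 2 + (h + 2) by omega] at hQ
  obtain ⟨P₁, hP₁Q, R, hRQ, hP₁R, hP₁, hR⟩ := hQ.exists_split_replicate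
  obtain ⟨M, hMR, P₂, hP₂R, hMP₂, hM, hP₂⟩ := hR.exists_split_replicate
  obtain ⟨y, hy, hgap, hgrow⟩ := hP₁.exists_head hj
  obtain ⟨y₂, hy₂, hgap₂, hgrow₂⟩ := hP₂.exists_head hj
  refine ⟨y, hP₁Q hy, M, hMR.trans hRQ, y₂, hRQ (hP₂R hy₂), hgap h fun x hx => hhQ x (hP₁Q hx),
    fun x hx => hgrow x fun p hp => hP₁R p hp x (hMR hx), hM, fun x hx => hgap₂ x fun p hp => ?_,
    fun z hz => hgrow₂ z fun p hp => hz p (hRQ (hP₂R hp))⟩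
  rcases mem_insert.1 hx with rfl | hx
  exacts [hP₁R x hy p (hP₂R hp), hMP₂ x hx p hp]

theorem exists_sparse_subset_of_isLarge_replicate_zero {m : ℕ} (c : ℕ) {h : ℕ} {L : Finset ℕ}
    (hL : ∀ x ∈ L, h < x) (hc : IsLarge (replicate c m) L) :
    ∃ Y ⊆ L, IsLarge (replicate c 0) Y ∧ SparseFor [m] (insert h Y) := by
  induction c generalizing h L with
  | zero => exact ⟨∅, empty_subset L, isLarge_nil _, by simpa using sparseFor_singleton [m] h⟩
  | succ c ih =>
    rw [Nat.add_comm] at hc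
    obtain ⟨P, hPL, R, hRL, hPR, hP, hR⟩ := hc.exists_split_replicate
    have hPne : P.Nonempty := hP.nonempty (by simp)
    set p := P.max' hPne
    have hpR : ∀ x ∈ R, p < x := hPR p (max'_mem P hPne)
    obtain ⟨Y, hYR, hY, hYs⟩ := ih hpR hR
    have hpY : ∀ b ∈ insert p Y, p ≤ b :=
      (forall_mem_insert _ _ _).2 ⟨le_rfl, fun b hb => (hpR b (hYR hb)).le⟩
    have hgap : IsLarge [m] (Ioc h p) :=
      hP.mono fun x hx => mem_Ioc.2 ⟨hL x (hPL hx), le_max' P x hx⟩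
    refine ⟨insert p Y, insert_subset (hPL (max'_mem P hPne)) (hYR.trans hRL), ?_,
      hYs.insert_of_le (by simp) hgap hpY⟩
    rw [isLarge_insert_iff fun y hy => hpR y (hYR hy), ksstep_replicate_succ,
      ksstep_singleton_zero, List.append_nil]
    exact hY

def HasSparseSubsets (m k : ℕ) : Prop :=
  ∀ (c h : ℕ) (L : Finset ℕ), (∀ x ∈ L, h + 4 ≤ x) → IsLarge (replicate c (k + m)) L →
    ∃ Y ⊆ L, IsLarge (replicate c k) (insert h Y) ∧ SparseFor [m] (insert h Y)

theorem exists_sparse_subset_and_next_head {m k h : ℕ} {Q : Finset ℕ} (hm : 0 < m)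
    (ih : HasSparseSubsets m k)
    (hQ : IsLarge [k + 1 + m] Q) (hhQ : ∀ x ∈ Q, h + 4 ≤ x) :
    ∃ A ⊆ Q, ∃ y₂ ∈ Q, IsLarge (replicate h k) A ∧ SparseFor [m] (insert h A) ∧
      (∀ a ∈ insert h A, IsLarge [m] (Ioc a y₂)) ∧ ∀ z, (∀ x ∈ Q, x < z) → 2 * y₂ < z := by
  obtain ⟨B, Q, rfl, hBQ, hQ⟩ := hQ.exists_insert (by simp)
  rw [Nat.add_right_comm, ksstep_singleton_succ] at hQ
  obtain ⟨y, hyQ, M, hMQ, y₂, hy₂Q, hgap, hgrow, hM, hgap₂, hgrow₂⟩ :=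
    (hQ.replicate_of_le (hhQ B (mem_insert_self B Q))).exists_two_heads (by omega)
      fun x hx => by have := hBQ x hx; have := hhQ B (mem_insert_self B Q); omega
  have hy := hhQ y (mem_insert_of_mem hyQ)
  obtain ⟨Y, hYM, hY, hYs⟩ := ih h y M (fun x hx => by have := hgrow x hx; omega) hM
  have hyY : ∀ b ∈ insert y Y, y ≤ b :=
    (forall_mem_insert _ _ _).2 ⟨le_rfl, fun b hb => by have := hgrow b (hYM hb); omega⟩
  have hgapY : ∀ a ∈ insert y Y, IsLarge [m] (Ioc a y₂) :=
    fun a ha => (hgap₂ a (insert_subset_insert y hYM ha)).of_le (by omega)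
  refine ⟨insert y Y, (insert_subset hyQ (hYM.trans hMQ)).trans (subset_insert B Q), y₂,
    mem_insert_of_mem hy₂Q, hY, hYs.insert_of_le (by simp) (hgap.of_le (by omega)) hyY,
    (forall_mem_insert _ _ _).2 ⟨?_, hgapY⟩,
    fun z hz => hgrow₂ z fun x hx => hz x (mem_insert_of_mem hx)⟩
  exact (hgapY y (mem_insert_self y Y)).mono (Ioc_subset_Ioc_left (by omega))

theorem hasSparseSubsets {m : ℕ} (hm : 0 < m) (k : ℕ) : HasSparseSubsets m k := by
  induction k with
  | zero =>
    intro c h L hL hc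
    obtain ⟨Y, hYL, hY, hYs⟩ := exists_sparse_subset_of_isLarge_replicate_zero c (h := h)
      (fun x hx => by have := hL x hx; omega) (by simpa using hc)
    exact ⟨Y, hYL, hY.mono (subset_insert h Y), hYs⟩
  | succ k ih =>
    intro c
    induction c with
    | zero => exact fun h L _ _ =>
        ⟨∅, empty_subset L, isLarge_nil _, by simpa using sparseFor_singleton [m] h⟩
    | succ c ihc =>
      intro h L hL hc
      rw [Nat.add_comm c] at hc
      obtain ⟨Q, hQL, L₂, hL₂L, hQL₂, hQ, hL₂⟩ := hc.exists_split_replicate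
      obtain ⟨A, hAQ, y₂, hy₂Q, hA, hAs, hgap, hgrow⟩ :=
        exists_sparse_subset_and_next_head hm ih hQ fun x hx => hL x (hQL hx)
      have hL₂y₂ : ∀ x ∈ L₂, 2 * y₂ < x := fun x hx => hgrow x fun q hq => hQL₂ q hq x hx
      have hy₂ := hL y₂ (hQL hy₂Q)
      obtain ⟨Y, hYL₂, hY, hYs⟩ := ihc y₂ L₂ (fun x hx => by have := hL₂y₂ x hx; omega) hL₂
      have hy₂Y : ∀ b ∈ insert y₂ Y, y₂ ≤ b :=
        (forall_mem_insert _ _ _).2 ⟨le_rfl, fun b hb => by have := hL₂y₂ b (hYL₂ hb); omega⟩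
      have hsub : A ∪ insert y₂ Y ⊆ L :=
        union_subset (hAQ.trans hQL) (insert_subset (hQL hy₂Q) (hYL₂.trans hL₂L))
      refine ⟨A ∪ insert y₂ Y, hsub, ?_, ?_⟩
      · rw [isLarge_insert_iff fun b hb => by have := hL b (hsub hb); omega,
          ksstep_replicate_succ, ksstep_singleton_succ]
        refine IsLarge.union (fun a ha b hb => ?_) hA hY
        exact (lt_of_isLarge_Ioc (hgap a (mem_insert_of_mem ha)) (by simp)).trans_le (hy₂Y b hb)
      · rw [← insert_union]
        exact hAs.union_of_le (by simp) hYs hgap hy₂Y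

theorem exists_sparse_subset_of_isLarge_insert {n m x : ℕ} {R : Finset ℕ} (hm : 0 < m)
    (hx : 3 ≤ x) (hxR : ∀ y ∈ R, x < y) (hR : IsLarge [n + m] R) :
    ∃ Y ⊆ R, IsLarge [n] (insert x Y) ∧ SparseFor [m] (insert x Y) := by
  rcases n with _ | n
  · exact ⟨∅, empty_subset R, isLarge_zero_of_nonempty (singleton_nonempty x),
      by simpa using sparseFor_singleton [m] x⟩
  obtain ⟨B, R, rfl, hBR, hR⟩ := hR.exists_insert (by simp)
  rw [Nat.add_right_comm, ksstep_singleton_succ] at hR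
  have hxB := hxR B (mem_insert_self B R)
  have hxR' : ∀ y ∈ R, x < y := fun y hy => hxB.trans (hBR y hy)
  rcases n with _ | n
  · obtain ⟨Y, hYR, hY, hYs⟩ := exists_sparse_subset_of_isLarge_replicate_zero x hxR'
      (by simpa using hR.replicate_of_le hxB.le)
    refine ⟨Y, hYR.trans (subset_insert B R), ?_, hYs⟩
    rw [isLarge_insert_iff fun y hy => hxR' y (hYR hy)]
    exact hY
  obtain ⟨S, hSR, M, hMR, hSM, hS, hM⟩ :=
    (hR.replicate_of_le (a := 1 + x) (by omega)).exists_split_replicate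
  obtain ⟨t, T, rfl, htT, hT⟩ := hS.exists_insert (by simp)
  rw [List.replicate_one, Nat.add_right_comm, ksstep_singleton_succ] at hT
  have hxt := hxR' t (hSR (mem_insert_self t T))
  have hxT : ∀ w ∈ T, x < w := fun w hw => hxt.trans (htT w hw)
  obtain ⟨y, hyT, hgap, hgrow⟩ := (hT.replicate_of_le (a := 2) (by omega)).exists_head (by omega)
  have hxy := hxT y hyT
  have hMy : ∀ z ∈ M, 2 * y < z := fun z hz => hgrow z fun w hw => hSM w (mem_insert_of_mem hw) z hz
  obtain ⟨Y, hYM, hY, hYs⟩ := hasSparseSubsets hm (n + 1) x y M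
    (fun z hz => by have := hMy z hz; omega) hM
  have hyY : ∀ b ∈ insert y Y, y ≤ b :=
    (forall_mem_insert _ _ _).2 ⟨le_rfl, fun b hb => by have := hMy b (hYM hb); omega⟩
  refine ⟨insert y Y, insert_subset (mem_insert_of_mem (hSR (mem_insert_of_mem hyT)))
    ((hYM.trans hMR).trans (subset_insert B R)), ?_,
    hYs.insert_of_le (by simp) ((hgap x hxT).of_le (by omega)) hyY⟩
  rw [isLarge_insert_iff fun b hb => hxy.trans_le (hyY b hb)]
  exact hY

theorem exists_sparse_subset_of_isLarge {n m : ℕ} {X : Finset ℕ} (hmin : ∀ x ∈ X, 3 ≤ x)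
    (hX : IsLarge [n + m, 0] X) : ∃ Y ⊆ X, IsLarge [n] Y ∧ SparseFor [m] Y := by
  rcases Nat.eq_zero_or_pos m with rfl | hm
  · exact ⟨X, subset_rfl, IsLarge.of_append (β := [0]) hX,
      fun x _ y _ hxy => isLarge_zero_of_nonempty (nonempty_Ioc.2 hxy)⟩
  obtain ⟨x, R, rfl, hxR, hR⟩ := hX.exists_insert (by simp)
  rw [← List.singleton_append, ksstep_append _ (List.cons_ne_nil 0 []), ksstep_singleton_zero]
    at hR
  obtain ⟨Y, hYR, hY, hYs⟩ :=
    exists_sparse_subset_of_isLarge_insert hm (hmin x (mem_insert_self x R)) hxR hR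
  exact ⟨insert x Y, insert_subset_insert x hYR, hY, hYs⟩

/-- Let `n, m ∈ ℕ`. If `X ⊆ ℕ` is a finite set which is `(ω^{n+m}+1)`-large and
`min X ≥ 3`, then there exists `Y ⊆ X` such that `Y` is `ω^n`-large and `ω^m`-sparse.
In particular, if `X` is `(ω^{n+3}+1)`-large and `min X ≥ 3`, then there exists
`Y ⊆ X` such that `Y` is `ω^n`-large and exp-sparse. -/
theorem sparse_subset_of_isLarge (n m : ℕ) (X : Finset ℕ) (hmin : ∀ x ∈ X, 3 ≤ x) :
    (IsLarge [n + m, 0] X → ∃ Y ⊆ X, IsLarge [n] Y ∧ SparseFor [m] Y) ∧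
    (IsLarge [n + 3, 0] X → ∃ Y ⊆ X, IsLarge [n] Y ∧ ExpSparse Y) := by
  refine ⟨exists_sparse_subset_of_isLarge hmin, fun hX => ?_⟩
  obtain ⟨Y, hYX, hY, hYs⟩ := exists_sparse_subset_of_isLarge hmin hX
  refine ⟨Y, hYX, hY, fun x hx => hmin x (hYX hx), fun x hx y hy hxy => ?_⟩
  exact four_pow_lt_of_isLarge_Ioc_three (by linarith [hmin x (hYX hx)]) (hYs x hx y hy hxy)
end

section
/- Let X ⊆ ℕ be a finite set which is ω^{n+3}-large and exp-sparse, and let d ∈ ℕ with d ≤ min X. Then X admits an (ω^n, d)-grouping; that is, for every colouring P : [X]^2 → 2 there exists an (ω^n, d)-grouping for P. -/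
/-- `Fs = ⟨F_i : i < ℓ⟩` is an `(α, β)`-grouping for the colouring `P` on `X`:
the `F_i` are subsets of `X`, each `F_i` is (nonempty and) `α`-large, the groups are
arranged in increasing order, the set `{max F_i : i < ℓ}` is `β`-large, and the colour
of a pair of elements from two distinct groups depends only on the groups. -/
def IsGrouping (α β : List ℕ) (X : Finset ℕ) (P : ℕ → ℕ → Fin 2)
    (Fs : List (Finset ℕ)) : Prop :=
  (∀ F ∈ Fs, F ⊆ X ∧ F.Nonempty ∧ IsLarge α F) ∧
  (∀ i j, i < j → j < Fs.length →
    ∀ x ∈ Fs.getD i ∅, ∀ y ∈ Fs.getD j ∅, x < y) ∧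
  IsLarge β (Fs.map fun F => F.sup id).toFinset ∧
  (∀ i j, i < j → j < Fs.length →
    ∀ x ∈ Fs.getD i ∅, ∀ x' ∈ Fs.getD i ∅, ∀ y ∈ Fs.getD j ∅, ∀ y' ∈ Fs.getD j ∅,
      P x y = P x' y')

/-- `X` admits an `(α, β)`-grouping if every colouring `P : [X]² → 2` has an
`(α, β)`-grouping. -/
def AdmitsGrouping (α β : List ℕ) (X : Finset ℕ) : Prop :=
  ∀ P : ℕ → ℕ → Fin 2, ∃ Fs : List (Finset ℕ), IsGrouping α β X P Fs


/-! Write `X = {x₀ < ⋯}`. As `X` is `ω^(n+3)`-large, `X \ {x₀}` is `ω^(n+2)·x₀`-large, hence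
splits into `d ≤ x₀` consecutive `ω^(n+2)`-large blocks. The engine is a Ketonen–Solovay
pigeonhole principle: on an exp-sparse set, an `ω^m·(2k-1)`-large set coloured with `k` colours
has an `ω^m`-large colour class. Going from left to right, each block is shrunk to an
`ω^(n+1)`-large group on which `P x ·` is constant for every point `x` of the earlier groups
(exp-sparseness keeps the `2 ^ #earlier` colour patterns few); then each group is shrunk to an
`ω^n`-large set on which `P · h` is constant for the first point `h` of every later group (at
most `2 ^ (x₀ - 1)` patterns). The colour between two final groups then depends only on the
groups. -/

namespace List

theorem Forall₂.exists_of_mem_left {α β : Type*} {R : α → β → Prop} {l₁ : List α} {l₂ : List β}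
    (h : Forall₂ R l₁ l₂) {a : α} (ha : a ∈ l₁) : ∃ b ∈ l₂, R a b := by
  induction h with
  | nil => simp at ha
  | cons hab _ ih =>
    rcases mem_cons.mp ha with rfl | ha
    · exact ⟨_, mem_cons_self, hab⟩
    · obtain ⟨b, hb, hR⟩ := ih ha
      exact ⟨b, mem_cons_of_mem _ hb, hR⟩

theorem Forall₂.flatten_sublist {α : Type*} {Ls Ms : List (List α)} (h : Forall₂ Sublist Ls Ms) :
    Ls.flatten.Sublist Ms.flatten := by
  induction h with
  | nil => exact Sublist.refl []
  | cons h₁ _ ih => exact h₁.append ih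

theorem Pairwise.getD_of_lt {α : Type*} {R : α → α → Prop} {l : List α} (h : l.Pairwise R)
    (d : α) {i j : ℕ} (hij : i < j) (hj : j < l.length) : R (l.getD i d) (l.getD j d) := by
  rw [getD_eq_getElem _ _ (hij.trans hj), getD_eq_getElem _ _ hj]
  exact pairwise_iff_getElem.mp h i j _ hj hij

end List

namespace Grouping

open List

/-! ### Largeness on reversed Cantor normal forms -/

/- `KSstep` on the reversed Cantor normal form, whose head is the least exponent:
in this form `α[m]` only changes the head. -/
def revStep : List ℕ → ℕ → List ℕ
  | [], _ => []
  | 0 :: l, _ => l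
  | (n + 1) :: l, m => replicate m n ++ l

def LargeList (α s : List ℕ) : Prop := s.foldl revStep α = []

@[simp] theorem revStep_nil (m : ℕ) : revStep [] m = [] := rfl

@[simp] theorem revStep_zero_cons (l : List ℕ) (m : ℕ) : revStep (0 :: l) m = l := rfl

@[simp] theorem revStep_succ_cons (n : ℕ) (l : List ℕ) (m : ℕ) :
    revStep ((n + 1) :: l) m = replicate m n ++ l := rfl

theorem revStep_cons_at_zero (a : ℕ) (l : List ℕ) : revStep (a :: l) 0 = l := by
  cases a <;> simp

theorem revStep_append {u : List ℕ} (hu : u ≠ []) (v : List ℕ) (m : ℕ) :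
    revStep (u ++ v) m = revStep u m ++ v := by
  match u with
  | 0 :: t => simp
  | (n + 1) :: t => simp

theorem reverse_KSstep (l : List ℕ) (m : ℕ) : (KSstep l m).reverse = revStep l.reverse m := by
  induction l with
  | nil => rfl
  | cons a u ih =>
    match a, u with
    | 0, [] => rfl
    | n + 1, [] => simp [KSstep]
    | a, b :: u' =>
      rw [KSstep, reverse_cons, ih, reverse_cons (a := a), revStep_append (by simp)]

theorem isLarge_iff_largeList {α : List ℕ} {X : Finset ℕ} :
    IsLarge α X ↔ LargeList α.reverse (X.sort (· ≤ ·)) := by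
  suffices ∀ (s β : List ℕ), (s.foldl KSstep β).reverse = s.foldl revStep β.reverse by
    rw [IsLarge, LargeList, ← this, reverse_eq_nil_iff]
  intro s
  induction s with
  | nil => intro β; rfl
  | cons x t ih => intro β; rw [foldl_cons, ih, reverse_KSstep, foldl_cons]

@[simp] theorem foldl_revStep_nil (s : List ℕ) : s.foldl revStep [] = [] := by
  induction s with
  | nil => rfl
  | cons x t ih => simpa using ih

theorem largeList_nil_left (s : List ℕ) : LargeList [] s := foldl_revStep_nil s

theorem largeList_cons_iff {α s : List ℕ} {x : ℕ} :
    LargeList α (x :: s) ↔ LargeList (revStep α x) s := Iff.rfl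

theorem largeList_singleton_succ_cons {k e : ℕ} {s : List ℕ} :
    LargeList [k + 1] (e :: s) ↔ LargeList (replicate e k) s := by
  simp [largeList_cons_iff]

theorem LargeList.ne_nil {α s : List ℕ} (hα : α ≠ []) (h : LargeList α s) : s ≠ [] := by
  rintro rfl; exact hα h

theorem LargeList.exists_append_split {u v s : List ℕ} (h : LargeList (u ++ v) s) :
    ∃ s₁ s₂, s = s₁ ++ s₂ ∧ LargeList u s₁ ∧ LargeList v s₂ := by
  induction s generalizing u with
  | nil =>
    obtain ⟨rfl, rfl⟩ := append_eq_nil_iff.mp h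
    exact ⟨[], [], rfl, rfl, rfl⟩
  | cons x t ih =>
    by_cases hu : u = []
    · subst hu
      exact ⟨[], x :: t, rfl, rfl, h⟩
    · rw [largeList_cons_iff, revStep_append hu] at h
      obtain ⟨s₁, s₂, rfl, h₁, h₂⟩ := ih h
      exact ⟨x :: s₁, s₂, rfl, h₁, h₂⟩

theorem LargeList.of_append {u v s : List ℕ} (h : LargeList (u ++ v) s) : LargeList u s := by
  obtain ⟨s₁, s₂, rfl, h₁, -⟩ := h.exists_append_split
  rw [LargeList, foldl_append, h₁, foldl_revStep_nil]

def ReachBelow (r : ℕ) : List ℕ → List ℕ → Prop :=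
  Relation.ReflTransGen fun a b => ∃ j ≤ r, b = revStep a j

theorem ReachBelow.tail {r : ℕ} {a b : List ℕ} (h : ReachBelow r a b) {j : ℕ} (hj : j ≤ r) :
    ReachBelow r a (revStep b j) :=
  Relation.ReflTransGen.tail h ⟨j, hj, rfl⟩

theorem reachBelow_revStep {j r : ℕ} (h : j ≤ r) (a : List ℕ) : ReachBelow r a (revStep a j) :=
  Relation.ReflTransGen.single ⟨j, h, rfl⟩

theorem ReachBelow.eq_nil {r : ℕ} {γ : List ℕ} (h : ReachBelow r [] γ) : γ = [] := by
  induction h with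
  | refl => rfl
  | tail _ hbc ih =>
    obtain ⟨j, -, rfl⟩ := hbc
    rw [ih, revStep_nil]

theorem reachBelow_append_self (r : ℕ) (u w : List ℕ) : ReachBelow r (u ++ w) w := by
  induction u with
  | nil => exact Relation.ReflTransGen.refl
  | cons a t ih =>
    exact Relation.ReflTransGen.head ⟨0, Nat.zero_le r, (revStep_cons_at_zero a _).symm⟩ ih

theorem reachBelow_replicate_append (r : ℕ) {i k : ℕ} (hik : i ≤ k) (a : ℕ) (w : List ℕ) :
    ReachBelow r (replicate k a ++ w) (replicate i a ++ w) := by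
  have : replicate k a ++ w = replicate (k - i) a ++ (replicate i a ++ w) := by
    rw [← append_assoc, ← replicate_add, Nat.sub_add_cancel hik]
  rw [this]
  exact reachBelow_append_self r _ _

/-- Dropping a point `j ≤ x` in front of `x` can only help: this makes largeness monotone. -/
theorem reachBelow_revStep_revStep (v : List ℕ) {j x : ℕ} (h : j ≤ x) :
    ReachBelow x (revStep v x) (revStep (revStep v j) x) := by
  match v, j with
  | [], _ => exact Relation.ReflTransGen.refl
  | 0 :: t, _ => exact reachBelow_revStep le_rfl t
  | (n + 1) :: t, 0 =>
    rw [revStep_cons_at_zero]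
    exact (reachBelow_append_self x _ t).tail le_rfl
  | 1 :: t, j + 1 =>
    simpa [replicate_succ] using reachBelow_replicate_append x (by omega : j ≤ x) 0 t
  | (n + 2) :: t, j + 1 =>
    have e : revStep (replicate (j + 1) (n + 1) ++ t) x =
        revStep (revStep ((n + 2) :: t) (j + 1)) x := by
      simp [replicate_succ]
    rw [revStep_succ_cons, ← e]
    exact (reachBelow_replicate_append x h _ t).tail le_rfl

theorem LargeList.of_reachBelow {s : List ℕ} (hs : s.Pairwise (· ≤ ·)) {r : ℕ}
    (hr : ∀ y ∈ s, r ≤ y) {β γ : List ℕ} (hreach : ReachBelow r β γ) (h : LargeList β s) :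
    LargeList γ s := by
  induction s generalizing r β γ with
  | nil =>
    have hβ : β = [] := h
    subst hβ
    rw [hreach.eq_nil]
    exact largeList_nil_left []
  | cons x t ih =>
    obtain ⟨hxt, ht⟩ := pairwise_cons.mp hs
    induction hreach with
    | refl => exact h
    | tail _ hbc ih₂ =>
      obtain ⟨j, hj, rfl⟩ := hbc
      exact ih ht hxt (reachBelow_revStep_revStep _ (hj.trans (hr x mem_cons_self))) ih₂

theorem LargeList.of_sublist {s t : List ℕ} (ht : t.Pairwise (· ≤ ·)) (hst : s.Sublist t)
    {α : List ℕ} (h : LargeList α s) : LargeList α t := by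
  induction t generalizing s α with
  | nil => rwa [sublist_nil.mp hst] at h
  | cons x t ih =>
    obtain ⟨hxt, ht⟩ := pairwise_cons.mp ht
    cases hst with
    | cons _ hst => exact (ih ht hst h).of_reachBelow ht hxt (reachBelow_revStep le_rfl α)
    | cons_cons _ hst => exact ih ht hst h

theorem LargeList.append {u v s₁ s₂ : List ℕ} (hu : LargeList u s₁) (hv : LargeList v s₂)
    (hs : (s₁ ++ s₂).Pairwise (· ≤ ·)) : LargeList (u ++ v) (s₁ ++ s₂) := by
  induction s₁ generalizing u with
  | nil =>
    have : u = [] := hu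
    subst this
    exact hv
  | cons x t ih =>
    by_cases hu₀ : u = []
    · subst hu₀
      exact hv.of_sublist hs (sublist_append_right _ _)
    · rw [cons_append, largeList_cons_iff, revStep_append hu₀]
      exact ih hu (pairwise_cons.mp hs).2

theorem largeList_replicate_zero_iff {s : List ℕ} {d : ℕ} :
    LargeList (replicate d 0) s ↔ d ≤ s.length := by
  suffices ∀ d, s.foldl revStep (replicate d 0) = replicate (d - s.length) 0 by
    rw [LargeList, this, replicate_eq_nil_iff]
    omega
  induction s with
  | nil => simp
  | cons x t ih =>
    rintro (_ | d)
    · simp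
    · rw [replicate_succ, foldl_cons, revStep_zero_cons, ih, length_cons]
      congr 1
      omega

theorem LargeList.replicate_le {a b m : ℕ} {s : List ℕ} (h : LargeList (replicate a m) s)
    (hb : b ≤ a) : LargeList (replicate b m) s := by
  rw [← Nat.add_sub_cancel' hb, replicate_add] at h
  exact h.of_append

theorem LargeList.exists_blocks {d m : ℕ} {s : List ℕ} (h : LargeList (replicate d m) s) :
    ∃ Bs : List (List ℕ), ∃ rest, Bs.length = d ∧ s = Bs.flatten ++ rest ∧
      ∀ B ∈ Bs, LargeList [m] B := by
  induction d generalizing s with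
  | zero => exact ⟨[], s, rfl, rfl, by simp⟩
  | succ d ih =>
    rw [replicate_succ, ← singleton_append] at h
    obtain ⟨B, s', rfl, hB, hs'⟩ := h.exists_append_split
    obtain ⟨Bs, rest, rfl, rfl, hall⟩ := ih hs'
    exact ⟨B :: Bs, rest, rfl, by simp, by simpa using ⟨hB, hall⟩⟩

/-! ### Splitting a large set in two -/

def ExpSparseList (s : List ℕ) : Prop := s.Pairwise fun x y => 4 ^ x < y

theorem ExpSparseList.pairwise_lt {s : List ℕ} (h : ExpSparseList s) : s.Pairwise (· < ·) :=
  h.imp fun hxy => (Nat.lt_pow_self (by norm_num)).trans hxy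

theorem ExpSparseList.pairwise_le {s : List ℕ} (h : ExpSparseList s) : s.Pairwise (· ≤ ·) :=
  h.pairwise_lt.imp le_of_lt

theorem ExpSparseList.sublist {s t : List ℕ} (hst : s.Sublist t) (h : ExpSparseList t) :
    ExpSparseList s :=
  Pairwise.sublist hst h

theorem two_mul_add_three_le_four_pow {k : ℕ} (hk : 2 ≤ k) : 2 * k + 3 ≤ 4 ^ k := by
  induction k, hk using Nat.le_induction with
  | base => norm_num
  | succ k _ ih => rw [pow_succ]; omega

/- The invariant that lets the splitting lemma `exists_rooted_filter` go through by induction. -/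
def Rooted (m r a : ℕ) (A : List ℕ) : Prop :=
  (∀ ρ ≤ r, LargeList (replicate a m) (ρ :: A)) ∧ LargeList (replicate (a - 1) m) A

theorem Rooted.of_le {m r r' a : ℕ} {A : List ℕ} (h : Rooted m r' a A) (hr : r ≤ r') :
    Rooted m r a A :=
  ⟨fun ρ hρ => h.1 ρ (hρ.trans hr), h.2⟩

theorem Rooted.of_sublist {m r a : ℕ} {A B : List ℕ} (h : Rooted m r a A) (hAB : A.Sublist B)
    (hB : B.Pairwise (· ≤ ·)) (hr : ∀ x ∈ B, r ≤ x) : Rooted m r a B :=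
  ⟨fun ρ hρ => (h.1 ρ hρ).of_sublist
      (pairwise_cons.mpr ⟨fun x hx => hρ.trans (hr x hx), hB⟩) (hAB.cons_cons ρ),
    h.2.of_sublist hB hAB⟩

theorem rooted_zero_left (m r : ℕ) (A : List ℕ) : Rooted m r 0 A :=
  ⟨fun _ _ => largeList_nil_left _, largeList_nil_left _⟩

theorem rooted_zero_length (r : ℕ) (A : List ℕ) : Rooted 0 r A.length A :=
  ⟨fun _ _ => largeList_replicate_zero_iff.mpr (by simp),
    largeList_replicate_zero_iff.mpr (by omega)⟩

/- For `ρ ≤ r` the first step turns `ω^(m+1)·(c+1)` into `ω^m·ρ + ω^(m+1)·c`; `u` covers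
`ω^m·ρ` with a point of `u` to spare, and that point roots `v`. -/
theorem rooted_append_of_large {m r r' c : ℕ} {u v : List ℕ}
    (hsort : (u ++ v).Pairwise (· ≤ ·)) (hu : ∀ x ∈ u, x ≤ r')
    (hlarge : LargeList (replicate (r + 1) m) u)
    (hv : ∀ ρ ≤ r', LargeList (replicate c (m + 1)) (ρ :: v)) :
    Rooted (m + 1) r (c + 1) (u ++ v) := by
  refine ⟨fun ρ hρ => ?_, ?_⟩
  · have h := hlarge.replicate_le (by omega : ρ + 1 ≤ r + 1)
    rw [replicate_succ'] at h
    obtain ⟨w₁, w₂, rfl, hw₁, hw₂⟩ := h.exists_append_split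
    obtain ⟨b, w₂', rfl⟩ := exists_cons_of_ne_nil (hw₂.ne_nil (by simp))
    have hsub : (w₁ ++ b :: v).Sublist (w₁ ++ b :: w₂' ++ v) := by
      rw [append_assoc, cons_append]
      exact ((sublist_append_right w₂' v).cons_cons b).append_left w₁
    rw [largeList_cons_iff, replicate_succ, revStep_succ_cons]
    exact (hw₁.append (hv b (hu b (by simp))) (hsort.sublist hsub)).of_sublist hsort hsub
  · obtain ⟨a, u', rfl⟩ := exists_cons_of_ne_nil (hlarge.ne_nil (by simp))
    simpa using (hv a (hu a mem_cons_self)).of_sublist hsort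
      ((sublist_append_right u' v).cons_cons a)

theorem rooted_filter_of_large (sel : ℕ → Bool) {m r r' cA cB : ℕ} {p Y : List ℕ}
    (hsort : (p ++ Y).Pairwise (· ≤ ·)) (hr : ∀ x ∈ p ++ Y, r ≤ x) (hp : ∀ x ∈ p, x ≤ r')
    (hrr' : r ≤ r') (hlarge : LargeList (replicate (r + 1) m) (p.filter sel))
    (hA : Rooted (m + 1) r' cA (Y.filter sel)) (hB : Rooted (m + 1) r' cB (Y.filter (!sel ·))) :
    Rooted (m + 1) r (cA + 1) ((p ++ Y).filter sel) ∧
      Rooted (m + 1) r cB ((p ++ Y).filter (!sel ·)) := by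
  have hsort_filter (f : ℕ → Bool) : ((p ++ Y).filter f).Pairwise (· ≤ ·) :=
    hsort.sublist filter_sublist
  refine ⟨?_, (hB.of_le hrr').of_sublist ?_ (hsort_filter _)
    fun x hx => hr x (mem_of_mem_filter hx)⟩
  · have hsort_sel := hsort_filter sel
    rw [filter_append] at hsort_sel ⊢
    exact rooted_append_of_large hsort_sel (fun x hx => hp x (mem_of_mem_filter hx))
      hlarge hA.1
  · rw [filter_append]
    exact sublist_append_right _ _

theorem exists_rooted_filter (sel : ℕ → Bool) (m : ℕ) :
    ∀ (c r : ℕ) (z : List ℕ), ExpSparseList z → (∀ x ∈ z, 2 * r + 3 ≤ x) →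
      LargeList (replicate c m) z →
      ∃ a b, c ≤ a + b ∧ Rooted m r a (z.filter sel) ∧ Rooted m r b (z.filter (!sel ·)) := by
  induction m with
  | zero =>
    intro c r z _ _ hz
    refine ⟨_, _, ?_, rooted_zero_length r _, rooted_zero_length r _⟩
    rw [← length_eq_length_filter_add]
    exact largeList_replicate_zero_iff.mp hz
  | succ m ihm =>
    intro c
    induction c with
    | zero => exact fun r _ _ _ _ => ⟨0, 0, le_rfl, rooted_zero_left .., rooted_zero_left ..⟩
    | succ c ihc =>
      intro r z hz hr hL
      rw [replicate_succ, ← singleton_append] at hL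
      obtain ⟨p, Y, rfl, hp, hY⟩ := hL.exists_append_split
      obtain ⟨e, q, rfl⟩ := exists_cons_of_ne_nil (hp.ne_nil (by simp))
      rw [largeList_singleton_succ_cons] at hp
      obtain ⟨r', hr'_mem, hr'_max⟩ := (e :: q).toFinset.exists_max_image id ⟨e, by simp⟩
      simp only [mem_toFinset, id] at hr'_mem hr'_max
      have he : 2 * r + 3 ≤ e := hr e (by simp)
      have her' : e ≤ r' := hr'_max e mem_cons_self
      have hY : ∀ y ∈ Y, 2 * r' + 3 ≤ y := fun y hy =>
        (two_mul_add_three_le_four_pow (by omega)).trans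
          ((pairwise_append.mp hz).2.2 r' hr'_mem y hy).le
      obtain ⟨sA, sB, hs, hqA, hqB⟩ := ihm e r q
        (hz.sublist ((sublist_cons_self e q).trans (sublist_append_left _ _)))
        (fun x hx => hr x (by simp [hx])) hp
      obtain ⟨cA, cB, hc, hYA, hYB⟩ := ihc r' Y (hz.sublist (sublist_append_right _ _)) hY ‹_›
      have hsort := hz.pairwise_le
      have hr_le : ∀ x ∈ (e :: q) ++ Y, r ≤ x := fun x hx => by have := hr x hx; omega
      have hlarge_of_q (f : ℕ → Bool) {k : ℕ} (h : LargeList (replicate k m) (q.filter f)) :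
          LargeList (replicate k m) ((e :: q).filter f) :=
        h.of_sublist ((pairwise_append.mp hsort).1.sublist filter_sublist)
          ((sublist_cons_self e q).filter f)
      -- The first `ω^(m+1)`-block splits into `sA + sB ≥ e ≥ 2r + 3` copies of `ω^m`, so one
      -- side gets `r + 2` of them, enough to gain a whole `ω^(m+1)`.
      rcases le_or_gt (r + 2) sA with hsA | hsA
      · exact ⟨cA + 1, cB, by omega, rooted_filter_of_large sel hsort hr_le hr'_max (by omega)
          (hlarge_of_q sel (hqA.2.replicate_le (by omega))) hYA hYB⟩
      · obtain ⟨hB, hA⟩ := rooted_filter_of_large (!sel ·) hsort hr_le hr'_max (by omega)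
          (hlarge_of_q _ (hqB.2.replicate_le (by omega))) hYB (by simpa using hYA)
        simp only [Bool.not_not] at hA
        exact ⟨cA, cB + 1, by omega, hA, hB⟩

/-! ### Pigeonhole for largeness -/

theorem LargeList.filter_not_of_not_large (sel : ℕ → Bool) {m c : ℕ} {z : List ℕ}
    (hz : ExpSparseList z) (h3 : ∀ x ∈ z, 3 ≤ x) (h : LargeList (replicate c m) z)
    (hsel : ¬ LargeList [m] (z.filter sel)) :
    LargeList (replicate (c - 2) m) (z.filter (!sel ·)) := by
  obtain ⟨a, b, hab, hA, hB⟩ := exists_rooted_filter sel m c 0 z hz (by simpa using h3) h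
  have ha : a ≤ 1 := by
    by_contra! ha
    exact hsel (by simpa using hA.2.replicate_le (by omega : 1 ≤ a - 1))
  exact hB.2.replicate_le (by omega)

theorem exists_largeList_filter_eq {ι : Type*} [DecidableEq ι] (g : ℕ → ι) {S : Finset ι}
    (hS : S.Nonempty) {c m : ℕ} {z : List ℕ} (hz : ExpSparseList z) (h3 : ∀ x ∈ z, 3 ≤ x)
    (hg : ∀ x ∈ z, g x ∈ S) (h : LargeList (replicate c m) z) (hc : 2 * S.card ≤ c + 1) :
    ∃ i ∈ S, LargeList [m] (z.filter (g · = i)) := by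
  induction hS using Finset.Nonempty.cons_induction generalizing c z with
  | singleton a =>
    refine ⟨a, Finset.mem_singleton_self a, ?_⟩
    rw [filter_eq_self.mpr fun x hx => by simpa using hg x hx]
    simpa using h.replicate_le (by simp at hc; omega : 1 ≤ c)
  | cons a S ha hS ih =>
    by_cases ha_large : LargeList [m] (z.filter (g · = a))
    · exact ⟨a, Finset.mem_cons_self a S, ha_large⟩
    have hrest := h.filter_not_of_not_large _ hz h3 ha_large
    have hg' : ∀ x ∈ z.filter (fun x => !decide (g x = a)), g x ∈ S := fun x hx => by
      obtain ⟨hxz, hxa⟩ := mem_filter.mp hx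
      simp only [Bool.not_eq_eq_eq_not, Bool.not_true, decide_eq_false_iff_not] at hxa
      exact (Finset.mem_cons.mp (hg x hxz)).resolve_left hxa
    rw [Finset.card_cons] at hc
    obtain ⟨i, hi, hi_large⟩ := ih (hz.sublist filter_sublist)
      (fun x hx => h3 x (mem_of_mem_filter hx)) hg' hrest (by omega)
    refine ⟨i, Finset.mem_cons_of_mem hi, ?_⟩
    have hia : i ≠ a := ne_of_mem_of_not_mem hi ha
    rwa [filter_filter, filter_congr (q := fun x => decide (g x = i)) fun x _ => by
      by_cases hx : g x = i <;> simp [hx, hia]] at hi_large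

theorem exists_sublist_largeList_forall_eq {ι : Type*} [Fintype ι] [DecidableEq ι] [Nonempty ι]
    (col : ℕ → ι) {m : ℕ} {G : List ℕ} (hG : LargeList [m + 1] G) (hsp : ExpSparseList G)
    (h3 : ∀ x ∈ G, 3 ≤ x) (hcard : ∀ x ∈ G, 2 * Fintype.card ι ≤ x + 1) :
    ∃ F, F.Sublist G ∧ LargeList [m] F ∧ ∀ x ∈ F, ∀ y ∈ F, col x = col y := by
  obtain ⟨e, G', rfl⟩ := exists_cons_of_ne_nil (hG.ne_nil (by simp))
  rw [largeList_singleton_succ_cons] at hG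
  obtain ⟨i, -, hi⟩ := exists_largeList_filter_eq col Finset.univ_nonempty
    (hsp.sublist (sublist_cons_self e G')) (fun x hx => h3 x (mem_cons_of_mem e hx))
    (fun _ _ => Finset.mem_univ _) hG (by simpa using hcard e mem_cons_self)
  refine ⟨_, filter_sublist.trans (sublist_cons_self e G'), hi, fun x hx y hy => ?_⟩
  rw [(by simpa using (mem_filter.mp hx).2 : col x = i),
    (by simpa using (mem_filter.mp hy).2 : col y = i)]

/-! ### Groupings -/

theorem two_mul_two_pow_length_le {E : List ℕ} {e : ℕ} (hE : E.Pairwise (· < ·))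
    (h2 : ∀ x ∈ E, 2 ≤ x) (he : ∀ x ∈ E, 4 ^ x < e) (he₁ : 1 ≤ e) : 2 * 2 ^ E.length ≤ e + 1 := by
  rcases eq_or_ne E [] with rfl | hE₀
  · simpa using he₁
  obtain ⟨M, hM, hM_max⟩ := E.toFinset.exists_max_image id (by simpa using hE₀)
  simp only [mem_toFinset, id] at hM hM_max
  have hlen : E.length ≤ M - 1 :=
    calc E.length = E.toFinset.card := (toFinset_card_of_nodup hE.nodup).symm
      _ ≤ (Finset.Icc 2 M).card := Finset.card_le_card fun x hx => by
        simp only [mem_toFinset] at hx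
        simpa using ⟨h2 x hx, hM_max x hx⟩
      _ = M - 1 := by simp
  have h2M := h2 M hM
  calc 2 * 2 ^ E.length = 2 ^ (E.length + 1) := by ring
    _ ≤ 2 ^ M := Nat.pow_le_pow_right (by norm_num) (by omega)
    _ ≤ 4 ^ M := Nat.pow_le_pow_left (by norm_num) M
    _ ≤ e + 1 := by have := he M hM; omega

theorem exists_groups_colour_const_right (P : ℕ → ℕ → Fin 2) (n : ℕ) :
    ∀ (Bs : List (List ℕ)) (E : List ℕ), ExpSparseList (E ++ Bs.flatten) →
      (∀ x ∈ E ++ Bs.flatten, 3 ≤ x) → (∀ B ∈ Bs, LargeList [n + 2] B) →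
      ∃ Gs : List (List ℕ), Gs.length = Bs.length ∧ (∀ G ∈ Gs, LargeList [n + 1] G) ∧
        Gs.flatten.Sublist Bs.flatten ∧
        (∀ x ∈ E, ∀ G ∈ Gs, ∀ y ∈ G, ∀ y' ∈ G, P x y = P x y') ∧
        Gs.Pairwise fun A B => ∀ x ∈ A, ∀ y ∈ B, ∀ y' ∈ B, P x y = P x y'
  | [], _, _, _, _ => ⟨[], rfl, by simp, by simp, by simp, Pairwise.nil⟩
  | B :: Bs, E, hsp, h3, hBs => by
    rw [flatten_cons] at hsp h3
    have hB_sub : B.Sublist (E ++ (B ++ Bs.flatten)) :=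
      (sublist_append_left B _).trans (sublist_append_right E _)
    have hcard : ∀ y ∈ B, 2 * 2 ^ E.length ≤ y + 1 := fun y hy =>
      two_mul_two_pow_length_le (hsp.sublist (sublist_append_left E _)).pairwise_lt
        (fun x hx => by have := h3 x (mem_append_left _ hx); omega)
        (fun x hx => (pairwise_append.mp hsp).2.2 x hx y (mem_append_left _ hy))
        (by have := h3 y (hB_sub.subset hy); omega)
    obtain ⟨G, hGB, hG, hG_const⟩ := exists_sublist_largeList_forall_eq
      (fun y (i : Fin E.length) => P E[i] y) (hBs B mem_cons_self) (hsp.sublist hB_sub)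
      (fun x hx => h3 x (hB_sub.subset hx)) (by simpa using hcard)
    have hEG_sub : (E ++ G ++ Bs.flatten).Sublist (E ++ (B ++ Bs.flatten)) := by
      rw [append_assoc]
      exact (hGB.append (Sublist.refl _)).append_left E
    obtain ⟨Gs, hlen, hGs, hGs_sub, hEGs, hGs_pw⟩ := exists_groups_colour_const_right P n Bs
      (E ++ G) (hsp.sublist hEG_sub) (fun x hx => h3 x (hEG_sub.subset hx))
      (fun B hB => hBs B (mem_cons_of_mem _ hB))
    refine ⟨G :: Gs, by simp [hlen], forall_mem_cons.mpr ⟨hG, hGs⟩,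
      by simpa using hGB.append hGs_sub, fun x hx G' hG' => ?_,
      pairwise_cons.mpr ⟨fun G' hG' x hx => hEGs x (mem_append_right _ hx) G' hG', hGs_pw⟩⟩
    rcases mem_cons.mp hG' with rfl | hG'
    · intro y hy y' hy'
      obtain ⟨i, hi, rfl⟩ := mem_iff_getElem.mp hx
      exact congrFun (hG_const y hy y' hy') ⟨i, hi⟩
    · exact hEGs x (mem_append_left _ hx) G' hG'

/- Only the first point `h` of each later group is tested, keeping the number of colour
patterns below `2 ^ K`; constancy of `P x` on later groups then gives
`P x y = P x h = P x' h = P x' y'`. -/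
theorem exists_groups_colour_homogeneous (P : ℕ → ℕ → Fin 2) (n K : ℕ) :
    ∀ Gs : List (List ℕ), Gs.length ≤ K + 1 →
      (∀ G ∈ Gs, LargeList [n + 1] G ∧ ExpSparseList G ∧ ∀ y ∈ G, 3 ≤ y ∧ 2 * 2 ^ K ≤ y + 1) →
      (Gs.Pairwise fun A B => ∀ x ∈ A, ∀ y ∈ B, ∀ y' ∈ B, P x y = P x y') →
      ∃ Fs : List (List ℕ), Forall₂ Sublist Fs Gs ∧ (∀ F ∈ Fs, LargeList [n] F) ∧
        Fs.Pairwise fun A B => ∀ x ∈ A, ∀ x' ∈ A, ∀ y ∈ B, ∀ y' ∈ B, P x y = P x' y'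
  | [], _, _, _ => ⟨[], Forall₂.nil, by simp, Pairwise.nil⟩
  | G :: Gs, hlen, hGs, hpw => by
    obtain ⟨hG, hG_sp, hG_bd⟩ := hGs G mem_cons_self
    set heads := Gs.map (·.headD 0)
    have hK : 2 ^ heads.length ≤ 2 ^ K :=
      Nat.pow_le_pow_right (by norm_num) (by simp only [length_cons] at hlen; simp [heads]; omega)
    obtain ⟨F, hFG, hF, hF_const⟩ := exists_sublist_largeList_forall_eq
      (fun x (i : Fin heads.length) => P x heads[i]) hG hG_sp (fun y hy => (hG_bd y hy).1)
      (fun y hy => by have := (hG_bd y hy).2; simp only [Fintype.card_fun, Fintype.card_fin]; omega)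
    obtain ⟨Fs, hFGs, hFs, hFs_pw⟩ := exists_groups_colour_homogeneous P n K Gs
      (by simp only [length_cons] at hlen; omega) (fun G' hG' => hGs G' (mem_cons_of_mem _ hG'))
      (pairwise_cons.mp hpw).2
    refine ⟨F :: Fs, Forall₂.cons hFG hFGs, forall_mem_cons.mpr ⟨hF, hFs⟩,
      pairwise_cons.mpr ⟨fun F' hF' x hx x' hx' y hy y' hy' => ?_, hFs_pw⟩⟩
    obtain ⟨G', hG', hF'G'⟩ := hFGs.exists_of_mem_left hF'
    obtain ⟨h, G'', rfl⟩ := exists_cons_of_ne_nil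
      ((hGs G' (mem_cons_of_mem _ hG')).1.ne_nil (by simp))
    obtain ⟨i, hi, hi_eq⟩ := mem_iff_getElem.mp (mem_map.mpr ⟨_, hG', rfl⟩ : h ∈ heads)
    have hconst := (pairwise_cons.mp hpw).1 _ hG'
    calc P x y = P x h := hconst x (hFG.subset hx) y (hF'G'.subset hy) h mem_cons_self
      _ = P x' h := by rw [← hi_eq]; exact congrFun (hF_const x hx x' hx') ⟨i, hi⟩
      _ = P x' y' := hconst x' (hFG.subset hx') h mem_cons_self y' (hF'G'.subset hy')

theorem exists_grouping_list (P : ℕ → ℕ → Fin 2) (n : ℕ) {x₀ d : ℕ} {xs : List ℕ}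
    (hsp : ExpSparseList (x₀ :: xs)) (hx₀ : 0 < x₀) (hd : d ≤ x₀)
    (hL : LargeList [n + 3] (x₀ :: xs)) :
    ∃ Fs : List (List ℕ), Fs.length = d ∧ Fs.flatten.Sublist xs ∧ (∀ F ∈ Fs, LargeList [n] F) ∧
      Fs.Pairwise fun A B => ∀ x ∈ A, ∀ x' ∈ A, ∀ y ∈ B, ∀ y' ∈ B, P x y = P x' y' := by
  rw [largeList_singleton_succ_cons] at hL
  obtain ⟨hbig, hxs⟩ := pairwise_cons.mp hsp
  have h4 : 4 ≤ 4 ^ x₀ := Nat.le_self_pow (by omega) 4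
  have hbound : ∀ y ∈ xs, 3 ≤ y ∧ 2 * 2 ^ (x₀ - 1) ≤ y + 1 := fun y hy => by
    have h2 : 2 * 2 ^ (x₀ - 1) ≤ 4 ^ x₀ := by
      rw [← pow_succ', Nat.sub_add_cancel (by omega : 1 ≤ x₀)]
      exact Nat.pow_le_pow_left (by norm_num) x₀
    have := hbig y hy
    omega
  obtain ⟨Bs, rest, hBs_len, rfl, hBs⟩ := (hL.replicate_le hd).exists_blocks
  have hBs_sub : Bs.flatten.Sublist (Bs.flatten ++ rest) := sublist_append_left _ _
  obtain ⟨Gs, hGs_len, hGs, hGs_sub, -, hGs_pw⟩ := exists_groups_colour_const_right P n Bs []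
    (by rw [nil_append]; exact hxs.sublist hBs_sub)
    (by simpa using fun x hx => (hbound x (hBs_sub.subset hx)).1) hBs
  have hGs_sub' : ∀ G ∈ Gs, G.Sublist (Bs.flatten ++ rest) := fun G hG =>
    (sublist_flatten_of_mem hG).trans (hGs_sub.trans hBs_sub)
  obtain ⟨Fs, hFG, hFs, hFs_pw⟩ := exists_groups_colour_homogeneous P n (x₀ - 1) Gs (by omega)
    (fun G hG => ⟨hGs G hG, hxs.sublist (hGs_sub' G hG),
      fun y hy => hbound y ((hGs_sub' G hG).subset hy)⟩) hGs_pw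
  exact ⟨Fs, by rw [hFG.length_eq, hGs_len, hBs_len],
    hFG.flatten_sublist.trans (hGs_sub.trans hBs_sub), hFs, hFs_pw⟩

theorem isGrouping_map_toFinset {α : List ℕ} {X : Finset ℕ} {P : ℕ → ℕ → Fin 2}
    {Fs : List (List ℕ)} (hX : ∀ F ∈ Fs, ∀ x ∈ F, x ∈ X) (hlt : Fs.flatten.Pairwise (· < ·))
    (hlarge : ∀ F ∈ Fs, LargeList α.reverse F) (hne : ∀ F ∈ Fs, F ≠ [])
    (hhom : Fs.Pairwise fun A B => ∀ x ∈ A, ∀ x' ∈ A, ∀ y ∈ B, ∀ y' ∈ B, P x y = P x' y') :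
    IsGrouping α (replicate Fs.length 0) X P (Fs.map toFinset) := by
  obtain ⟨hlt_in, hlt_across⟩ := pairwise_flatten.mp hlt
  have hmax_lt : ((Fs.map toFinset).map fun F => F.sup id).Pairwise (· < ·) := by
    refine pairwise_map.mpr (pairwise_map.mpr (hlt_across.imp_of_mem fun {A B} hA hB hAB => ?_))
    obtain ⟨a, ha, ha_eq⟩ :=
      A.toFinset.exists_mem_eq_sup ((toFinset_nonempty_iff A).mpr (hne A hA)) id
    obtain ⟨b, hb, hb_eq⟩ :=
      B.toFinset.exists_mem_eq_sup ((toFinset_nonempty_iff B).mpr (hne B hB)) id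
    rw [ha_eq, hb_eq]
    exact hAB a (mem_toFinset.mp ha) b (mem_toFinset.mp hb)
  refine ⟨?_, fun i j hij hj => ?_, ?_, fun i j hij hj => ?_⟩
  · simp only [mem_map]
    rintro _ ⟨F, hF, rfl⟩
    refine ⟨fun x hx => hX F hF x (mem_toFinset.mp hx),
      (toFinset_nonempty_iff F).mpr (hne F hF), ?_⟩
    have hF_lt := hlt_in F hF
    rw [isLarge_iff_largeList, (toFinset_sort _ hF_lt.nodup).mpr (hF_lt.imp le_of_lt)]
    exact hlarge F hF
  · have : (Fs.map toFinset).Pairwise fun A B => ∀ x ∈ A, ∀ y ∈ B, x < y :=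
      pairwise_map.mpr (hlt_across.imp fun h x hx y hy =>
        h x (mem_toFinset.mp hx) y (mem_toFinset.mp hy))
    exact this.getD_of_lt ∅ hij hj
  · rw [isLarge_iff_largeList, reverse_replicate, largeList_replicate_zero_iff, Finset.length_sort,
      toFinset_card_of_nodup hmax_lt.nodup, length_map, length_map]
  · have : (Fs.map toFinset).Pairwise
        fun A B => ∀ x ∈ A, ∀ x' ∈ A, ∀ y ∈ B, ∀ y' ∈ B, P x y = P x' y' :=
      pairwise_map.mpr (hhom.imp fun h x hx x' hx' y hy y' hy' =>
        h x (mem_toFinset.mp hx) x' (mem_toFinset.mp hx') y (mem_toFinset.mp hy) y'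
          (mem_toFinset.mp hy'))
    exact this.getD_of_lt ∅ hij hj

theorem expSparseList_sort {X : Finset ℕ} (h : ∀ x ∈ X, ∀ y ∈ X, x < y → 4 ^ x < y) :
    ExpSparseList (X.sort (· ≤ ·)) :=
  (Finset.sortedLT_sort X).pairwise.imp_of_mem fun ha hb hab =>
    h _ ((Finset.mem_sort _).mp ha) _ ((Finset.mem_sort _).mp hb) hab

end Grouping

open Grouping List

/-- Let `X ⊆ ℕ` be a finite set which is `ω^{n+3}`-large and exp-sparse, and let
`d ∈ ℕ` with `d ≤ min X`. Then `X` admits an `(ω^n, d)`-grouping: every colouring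
`P : [X]² → 2` has an `(ω^n, d)`-grouping. -/
theorem admitsGrouping_const (n : ℕ) (X : Finset ℕ)
    (hX : IsLarge [n + 3] X) (hs : ExpSparse X)
    (d : ℕ) (hd : ∀ x ∈ X, d ≤ x) :
    AdmitsGrouping [n] (List.replicate d 0) X := by
  intro P
  obtain ⟨x₀, xs, hX_sort⟩ := exists_cons_of_ne_nil ((isLarge_iff_largeList.mp hX).ne_nil (by simp))
  have hmem : ∀ x, x ∈ x₀ :: xs ↔ x ∈ X := fun x => by rw [← hX_sort, Finset.mem_sort]
  have hsp : ExpSparseList (x₀ :: xs) := hX_sort ▸ expSparseList_sort hs.2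
  have hx₀ : x₀ ∈ X := (hmem x₀).mp mem_cons_self
  rw [isLarge_iff_largeList, hX_sort, reverse_singleton] at hX
  obtain ⟨Fs, rfl, hFs_sub, hFs, hFs_pw⟩ :=
    exists_grouping_list P n hsp (by have := hs.1 x₀ hx₀; omega) (hd x₀ hx₀) hX
  have hFs_sub' : Fs.flatten.Sublist (x₀ :: xs) := hFs_sub.trans (sublist_cons_self _ _)
  exact ⟨Fs.map toFinset, isGrouping_map_toFinset
    (fun F hF x hx => (hmem x).mp (hFs_sub'.subset (mem_flatten_of_mem hF hx)))
    (hsp.pairwise_lt.sublist hFs_sub') (by simpa using hFs)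
    (fun F hF => (hFs F hF).ne_nil (by simp)) hFs_pw⟩
end
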